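/- arXiv:2308.06295 — 4 statements merged into one kernel-verified Lean document; each statement's English description precedes it below -/
import Mathlib

section
/- Let x be an oscillatory solution of x'(t) = p(t)·x(τ̄(t)) on [t₀,∞) with |p| ≡ 1 and limsup_{t→∞} |x(t)| > 0. Then for every ε > 0 there exist a measurable function p̃ : ℝ → ℝ with 1 ≤ |p̃(t)| ≤ 1 + ε and sgn(p̃(t)) = sgn(p(t)) for a.e. t ≥ t₀, and an unbounded oscillatory solution y of y'(t) = p̃(t)·y(τ̄(t)) on [t₀,∞) whose set of zeros in [t₀,∞) coincides with that of x. -/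
open Real MeasureTheory Filter Set

noncomputable section

/-- `x` is the solution of `x'(t) = -x(t-τ)` with `x ≡ 1` on `(-∞,0]`:
`x(t) = 1 - ∫_0^t x(s-τ) ds` for `t ≥ 0`. -/
def IsXSol (τ : ℝ) (x : ℝ → ℝ) : Prop :=
  Continuous x ∧ (∀ t ≤ (0:ℝ), x t = 1) ∧
    ∀ t ≥ (0:ℝ), x t = 1 - ∫ s in (0:ℝ)..t, x (s - τ)

/-- The first positive root of a function. -/
noncomputable def firstRoot (x : ℝ → ℝ) : ℝ := sInf {t : ℝ | 0 < t ∧ x t = 0}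

/-- `ψ` is the solution of `ψ'(t) = max{x_τ(ϱ(τ)+t-τ), ψ(t)}` on `[0,τ]`,
`ψ'(t) = ψ(t)` on `[τ,∞)`, `ψ(0) = 0`. -/
def IsPsiSol (τ ρ : ℝ) (xτ ψ : ℝ → ℝ) : Prop :=
  ContinuousOn ψ (Ici (0:ℝ)) ∧ ψ 0 = 0 ∧
    (∀ t ∈ Icc (0:ℝ) τ, ψ t = ∫ s in (0:ℝ)..t, max (xτ (ρ + s - τ)) (ψ s)) ∧
    (∀ t ≥ τ, ψ t = ψ τ + ∫ s in τ..t, ψ s)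

/-- A (continuous, integrated-form) solution of the delay equation
`x'(t) = p(t) x(τ̄(t))` on `[t₀,∞)`. -/
def IsDelaySolution (p τd : ℝ → ℝ) (t₀ : ℝ) (x : ℝ → ℝ) : Prop :=
  Continuous x ∧ ∀ t ≥ t₀, x t = x t₀ + ∫ s in t₀..t, p s * x (τd s)

/-- `x` is `α`-oscillating: eventually every interval on which `x` has no zero
has length at most `α`. -/
def AlphaOscillating (α : ℝ) (x : ℝ → ℝ) : Prop :=
  ∃ T : ℝ, ∀ a b : ℝ, T ≤ a → a < b → (∀ t ∈ Ioo a b, x t ≠ 0) → b - a ≤ α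

/-- `x` is oscillatory: it has arbitrarily large zeros. -/
def Oscillatory (x : ℝ → ℝ) : Prop := ∀ T : ℝ, ∃ t ≥ T, x t = 0


theorem stmt11 (p τd : ℝ → ℝ) (hpm : Measurable p)
    (hploc : MeasureTheory.LocallyIntegrable p)
    (hτdm : Measurable τd) (hτdle : ∀ t, τd t ≤ t)
    (hτdinf : Filter.Tendsto τd Filter.atTop Filter.atTop)
    (t₀ : ℝ) (x : ℝ → ℝ) (hx : IsDelaySolution p τd t₀ x)
    (hosc : Oscillatory x)
    (hp1 : ∀ᵐ t : ℝ ∂volume, |p t| = 1)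
    (hM : ∃ m > (0:ℝ), ∃ᶠ t in Filter.atTop, m ≤ |x t|) :
    ∀ ε > (0:ℝ), ∃ pt : ℝ → ℝ, Measurable pt ∧
      (∀ᵐ t : ℝ ∂volume, t₀ ≤ t →
        1 ≤ |pt t| ∧ |pt t| ≤ 1 + ε ∧ Real.sign (pt t) = Real.sign (p t)) ∧
      ∃ y : ℝ → ℝ, IsDelaySolution pt τd t₀ y ∧ Oscillatory y ∧
        (∀ B : ℝ, ∃ t ≥ t₀, B < |y t|) ∧
        (∀ t ≥ t₀, (x t = 0 ↔ y t = 0)) := by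
  intro ε hε
  obtain ⟨hxc, hxeq⟩ := hx
  obtain ⟨m, hm, hfreq⟩ := hM
  have hεg1 : (1:ℝ) ≤ 1 + ε := by linarith
  set f : ℝ → ℝ := fun s => p s * x (τd s) with hf
  have hxeq' : ∀ t, t₀ ≤ t → x t = x t₀ + ∫ s in t₀..t, f s := hxeq
  have hfm : Measurable f := hpm.mul (hxc.measurable.comp hτdm)
  -- f is integrable on compacts of [t₀, ∞)
  have hInt : ∀ T, IntegrableOn f (Set.Ioc t₀ T) volume := by
    intro T
    have hex : ∃ t1, t₀ ≤ t1 ∧ T ≤ t1 ∧ x t1 ≠ x t₀ := by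
      by_cases h0 : x t₀ = 0
      · obtain ⟨s, hs, hms⟩ := (frequently_atTop.mp hfreq) (max T t₀)
        refine ⟨s, le_trans (le_max_right _ _) hs, le_trans (le_max_left _ _) hs, ?_⟩
        rw [h0]; intro h; rw [h] at hms; simp at hms; linarith
      · obtain ⟨s, hs, hxs⟩ := hosc (max T t₀)
        exact ⟨s, le_trans (le_max_right _ _) hs, le_trans (le_max_left _ _) hs,
          by rw [hxs]; exact fun h => h0 h.symm⟩
    obtain ⟨t1, ht1, hTt1, hne⟩ := hex
    have hint1 : IntegrableOn f (Set.Ioc t₀ t1) volume := by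
      by_contra hni
      have hni' : ¬ IntervalIntegrable f volume t₀ t1 := by
        rw [intervalIntegrable_iff, Set.uIoc_of_le ht1]; exact hni
      have heq := hxeq' t1 ht1
      rw [intervalIntegral.integral_undef hni'] at heq
      exact hne (by linarith)
    exact hint1.mono_set (Set.Ioc_subset_Ioc_right hTt1)
  have hII : ∀ a b, t₀ ≤ a → a ≤ b → IntervalIntegrable f volume a b := by
    intro a b ha hab
    rw [intervalIntegrable_iff, Set.uIoc_of_le hab]
    exact (hInt b).mono_set (Set.Ioc_subset_Ioc_left ha)
  have hdiff : ∀ a b, t₀ ≤ a → a ≤ b → (∫ s in a..b, f s) = x b - x a := by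
    intro a b ha hab
    have h1 := hxeq' a ha
    have h2 := hxeq' b (ha.trans hab)
    have hadd := intervalIntegral.integral_add_adjacent_intervals
      (hII t₀ a le_rfl ha) (hII a b ha hab)
    linarith
  -- sparse sequence of zeros
  have key : ∀ r : ℝ, ∃ z : ℝ, x z = 0 ∧ r + 1 ≤ z ∧ ∀ s, z ≤ s → r ≤ τd s := by
    intro r
    obtain ⟨T, hT⟩ := Filter.eventually_atTop.mp (hτdinf.eventually_ge_atTop r)
    obtain ⟨z, hz, hxz⟩ := hosc (max (r + 1) T)
    exact ⟨z, hxz, (le_max_left _ _).trans hz,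
      fun s hs => hT s (((le_max_right _ _).trans hz).trans hs)⟩
  choose nxt hnxt0 hnxt1 hnxt2 using key
  obtain ⟨z0, hz0, hxz0⟩ := hosc t₀
  set t : ℕ → ℝ := fun n => Nat.rec z0 (fun _ prev => nxt prev) n with hts
  have htS : ∀ k, t (k + 1) = nxt (t k) := fun k => rfl
  have htx : ∀ k, x (t k) = 0 := by
    intro k
    cases k with
    | zero => exact hxz0
    | succ k => rw [htS]; exact hnxt0 (t k)
  have htmono1 : ∀ k, t k + 1 ≤ t (k + 1) := fun k => hnxt1 (t k)
  have htτ : ∀ k s, t (k + 1) ≤ s → t k ≤ τd s := fun k s hs => hnxt2 (t k) s hs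
  have htge : ∀ k, t₀ ≤ t k := by
    intro k
    induction k with
    | zero => exact hz0
    | succ k ih => have := htmono1 k; linarith
  have htsm : StrictMono t := strictMono_nat_of_lt_succ (fun k => by linarith [htmono1 k])
  have htunb : ∀ u : ℝ, ∃ k, u < t k := by
    intro u
    have hk : ∀ k : ℕ, t 0 + k ≤ t k := by
      intro k
      induction k with
      | zero => simp
      | succ k ih => have := htmono1 k; push_cast; push_cast at ih; linarith
    obtain ⟨n, hn⟩ := exists_nat_gt (u - t 0)
    exact ⟨n, by have := hk n; linarith⟩
  -- the counting function and the step function lam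
  set cnt : ℝ → ℕ := fun u => sInf {k | u < t k} with hcnt
  have hcnt_spec : ∀ u, u < t (cnt u) := fun u => Nat.sInf_mem (htunb u)
  have hcnt_le : ∀ u k, u < t k → cnt u ≤ k := fun u k h => Nat.sInf_le h
  have hcnt_gt : ∀ u k, t k ≤ u → k < cnt u := by
    intro u k h
    by_contra hc
    push_neg at hc
    exact absurd (lt_of_lt_of_le (hcnt_spec u) (htsm.monotone hc)) (not_lt.mpr h)
  have hcnt_mono : Monotone cnt := fun u v huv =>
    hcnt_le u (cnt v) (lt_of_le_of_lt huv (hcnt_spec v))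
  have hcnt_zero : ∀ u, cnt u = 0 ↔ u < t 0 := by
    intro u
    constructor
    · intro h; have := hcnt_spec u; rwa [h] at this
    · intro h; exact Nat.le_zero.mp (hcnt_le u 0 h)
  have hcnt_succ : ∀ u k, cnt u = k + 1 ↔ (t k ≤ u ∧ u < t (k + 1)) := by
    intro u k
    constructor
    · intro h
      refine ⟨?_, by have := hcnt_spec u; rwa [h] at this⟩
      by_contra hc
      push_neg at hc
      have := hcnt_le u k hc
      omega
    · rintro ⟨h1, h2⟩
      have := hcnt_gt u k h1
      have := hcnt_le u (k + 1) h2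
      omega
  have hcnt_tk : ∀ k, cnt (t k) = k + 1 :=
    fun k => (hcnt_succ _ _).mpr ⟨le_rfl, htsm (Nat.lt_succ_self k)⟩
  set lam : ℝ → ℝ := fun u => (1 + ε) ^ (cnt u) with hlam
  have hlam_pos : ∀ u, 0 < lam u := fun u => pow_pos (by linarith) _
  have hlam_mono : Monotone lam := fun u v huv => pow_le_pow_right₀ hεg1 (hcnt_mono huv)
  have hlam_meas : Measurable lam := hlam_mono.measurable
  set y : ℝ → ℝ := fun s => lam s * x s with hy
  set pt : ℝ → ℝ := fun s => p s * (lam s / lam (τd s)) with hpt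
  have hptw : ∀ s, pt s * y (τd s) = lam s * f s := by
    intro s
    have h := (hlam_pos (τd s)).ne'
    simp only [hpt, hy, hf]
    field_simp
  have hgII : ∀ a b, t₀ ≤ a → a ≤ b → IntervalIntegrable (fun s => lam s * f s) volume a b := by
    intro a b ha hab
    rw [intervalIntegrable_iff, Set.uIoc_of_le hab]
    refine Integrable.bdd_mul (c := lam b)
      ((hInt b).mono_set (Set.Ioc_subset_Ioc_left ha))
      (hlam_meas.aestronglyMeasurable.restrict) ?_
    refine (ae_restrict_iff' measurableSet_Ioc).mpr (ae_of_all _ ?_)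
    intro s hs
    rw [Real.norm_eq_abs, abs_of_pos (hlam_pos s)]
    exact hlam_mono hs.2
  -- local constancy integral formula
  have hA : ∀ a b, t₀ ≤ a → a ≤ b → (∀ s ∈ Set.Ico a b, cnt s = cnt a) →
      (∫ s in a..b, lam s * f s) = (1 + ε) ^ (cnt a) * (x b - x a) := by
    intro a b ha hab hcon
    have hsb : ∀ᵐ s : ℝ ∂volume, s ≠ b := by
      rw [ae_iff]
      simp only [ne_eq, not_not, Set.setOf_eq_eq_singleton]
      exact measure_singleton b
    have hae : ∀ᵐ s ∂volume, s ∈ Set.uIoc a b → lam s * f s = (1 + ε) ^ (cnt a) * f s := by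
      filter_upwards [hsb] with s hsnb hsmem
      rw [Set.uIoc_of_le hab] at hsmem
      have hsi : s ∈ Set.Ico a b := ⟨le_of_lt hsmem.1, lt_of_le_of_ne hsmem.2 hsnb⟩
      simp only [hlam]
      rw [hcon s hsi]
    rw [intervalIntegral.integral_congr_ae hae, intervalIntegral.integral_const_mul,
      hdiff a b ha hab]
  -- cumulative identity at the zeros
  have hR : ∀ j, y t₀ + (∫ s in t₀..(t j), lam s * f s) = 0 := by
    intro j
    induction j with
    | zero =>
      have hcon : ∀ s ∈ Set.Ico t₀ (t 0), cnt s = cnt t₀ := by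
        intro s hs
        have h1 : cnt s = 0 := (hcnt_zero s).mpr hs.2
        have h2 : cnt t₀ = 0 := (hcnt_zero t₀).mpr (lt_of_le_of_lt hs.1 hs.2)
        rw [h1, h2]
      rw [hA t₀ (t 0) le_rfl (htge 0) hcon, htx 0]
      simp only [hy, hlam]
      ring
    | succ j ih =>
      have hjj : t j ≤ t (j + 1) := le_of_lt (htsm (Nat.lt_succ_self j))
      have hsplit := intervalIntegral.integral_add_adjacent_intervals
        (hgII t₀ (t j) le_rfl (htge j)) (hgII (t j) (t (j + 1)) (htge j) hjj)
      rw [← hsplit]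
      have hcon : ∀ s ∈ Set.Ico (t j) (t (j + 1)), cnt s = cnt (t j) := by
        intro s hs
        rw [hcnt_tk j]
        exact (hcnt_succ s j).mpr ⟨hs.1, hs.2⟩
      rw [hA (t j) (t (j + 1)) (htge j) hjj hcon, htx j, htx (j + 1)]
      simp only [sub_self, mul_zero, sub_zero]
      linarith
  -- the delay equation for y
  have hmain : ∀ u, t₀ ≤ u → y u = y t₀ + ∫ s in t₀..u, pt s * y (τd s) := by
    intro u hu
    have hint_eq : (∫ s in t₀..u, pt s * y (τd s)) = ∫ s in t₀..u, lam s * f s :=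
      intervalIntegral.integral_congr (fun s _ => hptw s)
    rw [hint_eq]
    cases hc : cnt u with
    | zero =>
      have hu0 : u < t 0 := (hcnt_zero u).mp hc
      have hcon : ∀ s ∈ Set.Ico t₀ u, cnt s = cnt t₀ := by
        intro s hs
        have h1 : cnt s = 0 := (hcnt_zero s).mpr (lt_trans hs.2 hu0)
        have h2 : cnt t₀ = 0 := (hcnt_zero t₀).mpr (lt_of_le_of_lt hu hu0)
        rw [h1, h2]
      rw [hA t₀ u le_rfl hu hcon]
      have h0 : cnt t₀ = 0 := (hcnt_zero t₀).mpr (lt_of_le_of_lt hu hu0)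
      simp only [hy, hlam, h0, hc, pow_zero, one_mul]
      ring
    | succ j =>
      have hj := (hcnt_succ u j).mp hc
      have hsplit := intervalIntegral.integral_add_adjacent_intervals
        (hgII t₀ (t j) le_rfl (htge j)) (hgII (t j) u (htge j) hj.1)
      rw [← hsplit]
      have hcon : ∀ s ∈ Set.Ico (t j) u, cnt s = cnt (t j) := by
        intro s hs
        rw [hcnt_tk j]
        exact (hcnt_succ s j).mpr ⟨hs.1, lt_trans hs.2 hj.2⟩
      rw [hA (t j) u (htge j) hj.1 hcon, hcnt_tk j, htx j]
      have hRj := hR j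
      have hlu : lam u = (1 + ε) ^ (j + 1) := by simp only [hlam, hc]
      simp only [hy, sub_zero]
      simp only [hy] at hRj
      rw [hlu]
      linarith
  -- continuity of y
  have hyc : Continuous y := by
    rw [continuous_iff_continuousAt]
    intro a
    by_cases hmem : ∃ k, a = t k
    · obtain ⟨k, rfl⟩ := hmem
      have hxa : x (t k) = 0 := htx k
      have hya : y (t k) = 0 := by simp [hy, hxa]
      rw [ContinuousAt, hya]
      have hbound : ∀ᶠ s in nhds (t k), ‖y s‖ ≤ (1 + ε) ^ (k + 1) * |x s| := by
        have hub : t k < t (k + 1) := htsm (Nat.lt_succ_self k)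
        filter_upwards [Iio_mem_nhds hub] with s hs
        have hcle : cnt s ≤ k + 1 := hcnt_le s (k + 1) hs
        have hls : lam s ≤ (1 + ε) ^ (k + 1) := pow_le_pow_right₀ hεg1 hcle
        have : ‖y s‖ = lam s * |x s| := by
          rw [Real.norm_eq_abs, hy]
          simp only
          rw [abs_mul, abs_of_pos (hlam_pos s)]
        rw [this]
        exact mul_le_mul_of_nonneg_right hls (abs_nonneg _)
      have hx0 : Tendsto (fun s => (1 + ε) ^ (k + 1) * |x s|) (nhds (t k)) (nhds 0) := by
        have hcont : Continuous fun s => (1 + ε) ^ (k + 1) * |x s| :=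
          continuous_const.mul hxc.abs
        have := hcont.tendsto (t k)
        simpa [hxa] using this
      exact squeeze_zero_norm' hbound hx0
    · push_neg at hmem
      cases hc : cnt a with
      | zero =>
        have ha0 : a < t 0 := (hcnt_zero a).mp hc
        have hev : ∀ᶠ s in nhds a, ((1 + ε) ^ (0:ℕ) * x s) = y s := by
          filter_upwards [Iio_mem_nhds ha0] with s hs
          have h1 : cnt s = 0 := (hcnt_zero s).mpr hs
          simp [hy, hlam, h1]
        exact ((continuous_const.mul hxc).continuousAt).congr hev
      | succ j =>
        have hj := (hcnt_succ a j).mp hc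
        have haj : t j < a := lt_of_le_of_ne hj.1 (fun h => hmem j h.symm)
        have hev : ∀ᶠ s in nhds a, ((1 + ε) ^ (j + 1) * x s) = y s := by
          filter_upwards [Ioo_mem_nhds haj hj.2] with s hs
          have h1 : cnt s = j + 1 := (hcnt_succ s j).mpr ⟨le_of_lt hs.1, hs.2⟩
          simp [hy, hlam, h1]
        exact ((continuous_const.mul hxc).continuousAt).congr hev
  refine ⟨pt, ?_, ?_, y, ⟨hyc, hmain⟩, ?_, ?_, ?_⟩
  · exact hpm.mul (hlam_meas.div (hlam_meas.comp hτdm))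
  · filter_upwards [hp1] with s hps hs
    have hpos : 0 < lam s / lam (τd s) := div_pos (hlam_pos s) (hlam_pos (τd s))
    have habs : |pt s| = lam s / lam (τd s) := by
      simp only [hpt]
      rw [abs_mul, hps, one_mul, abs_of_pos hpos]
    refine ⟨?_, ?_, ?_⟩
    · rw [habs, le_div_iff₀ (hlam_pos (τd s)), one_mul]
      exact hlam_mono (hτdle s)
    · rw [habs, div_le_iff₀ (hlam_pos (τd s))]
      have hcc : cnt s ≤ cnt (τd s) + 1 := by
        cases hcs : cnt s with
        | zero => omega
        | succ j =>
          cases j with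
          | zero => omega
          | succ i =>
            have h1 := ((hcnt_succ s (i + 1)).mp hcs).1
            have h2 := htτ i s h1
            have h3 := hcnt_gt (τd s) i h2
            omega
      calc lam s = (1 + ε) ^ (cnt s) := rfl
        _ ≤ (1 + ε) ^ (cnt (τd s) + 1) := pow_le_pow_right₀ hεg1 hcc
        _ = (1 + ε) * lam (τd s) := by rw [pow_succ]; simp only [hlam]; ring
    · rcases lt_trichotomy (p s) 0 with hneg | hzero | hposp
      · have h1 : pt s < 0 := mul_neg_of_neg_of_pos hneg hpos
        rw [Real.sign_of_neg h1, Real.sign_of_neg hneg]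
      · simp only [hpt, hzero, zero_mul, Real.sign_zero]
      · have h1 : 0 < pt s := mul_pos hposp hpos
        rw [Real.sign_of_pos h1, Real.sign_of_pos hposp]
  · intro T
    obtain ⟨s, hs, hxs⟩ := hosc T
    exact ⟨s, hs, by simp [hy, hxs]⟩
  · intro B
    obtain ⟨n, hn⟩ := pow_unbounded_of_one_lt (B / m) (show (1:ℝ) < 1 + ε by linarith)
    obtain ⟨s, hs, hms⟩ := frequently_atTop.mp hfreq (t n)
    refine ⟨s, (htge n).trans hs, ?_⟩
    have h1 : B < (1 + ε) ^ n * m := by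
      rw [div_lt_iff₀ hm] at hn
      linarith
    have h2 : (1 + ε) ^ n ≤ lam s :=
      pow_le_pow_right₀ hεg1 (le_of_lt (hcnt_gt s n hs))
    have h3 : |y s| = lam s * |x s| := by
      rw [hy]
      simp only
      rw [abs_mul, abs_of_pos (hlam_pos s)]
    calc B < (1 + ε) ^ n * m := h1
      _ ≤ lam s * |x s| := mul_le_mul h2 hms (le_of_lt hm) (le_of_lt (hlam_pos s))
      _ = |y s| := h3.symm
  · intro u hu
    constructor
    · intro h; simp [hy, h]
    · intro h
      have : lam u * x u = 0 := h
      exact (mul_eq_zero.mp this).resolve_left (hlam_pos u).ne'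
end
end

section
/- For each fixed τ ∈ (1/e, 1], the function ϖ_τ is well-defined (the two defining pieces agree at the endpoints), continuous, nonnegative, Λ(τ)-periodic, and vanishes exactly at the integer multiples of Λ(τ); moreover there exist measurable functions p, τ̄ : ℝ → ℝ with |p(t)| = 1 for all t, τ̄(t) ≤ t for all t, sup_t (t - τ̄(t)) = τ, and τ̄(t) → ∞ as t → ∞, such that ϖ_τ(t) = ϖ_τ(0) + ∫_0^t p(s)·ϖ_τ(τ̄(s)) ds for all t ∈ ℝ. In particular ϖ_τ is a Λ(τ)-oscillating, Λ(τ)-periodic solution of the delay equation x'(t) = p(t)·x(τ̄(t)). -/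
open Real MeasureTheory Filter Set

noncomputable section

/-!
On one period `ϖ` is `ψ` followed by a shifted copy of `x`, hence continuous, positive inside
the period and zero at its ends. Since `τ ≤ 1`, `x = 1 - t` on `[0, τ]`, so the root `ρ` is at
least `τ`; since `ψ` grows with slope at most `1` before reaching `1`, also `τ ≤ Λ - ρ`.

The delay equation is read off on one period `[0, Λ)`, with `σ = Λ - ρ`: on `[0, τ)` the delay
is `τ` or `0`, whichever gives the larger value of `ϖ`, which reproduces
`ψ' = max (x (ρ + t - τ)) ψ`; on `[τ, σ)` there is no delay (`ψ' = ψ`); on `[σ, Λ)` the sign is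
`-1` and the delay `min (t - σ) τ` reads `ϖ (max σ (t - τ)) = x (t - σ - τ)`, which reproduces
`x' = -x (· - τ)`. Both sides being `Λ`-periodic and `ϖ 0 = ϖ Λ`, the identity extends from
`[0, Λ]` to `ℝ`.
-/

open Function

theorem eq_mul_exp_of_eq_add_integral {g : ℝ → ℝ} {a b : ℝ} (hg : ContinuousOn g (Ici a))
    (h : ∀ t ≥ a, g t = g a + ∫ s in a..t, g s) (hb : a ≤ b) :
    g b = g a * exp (b - a) := by
  set G : ℝ → ℝ := fun t => g (max t a)
  have hG : Continuous G :=
    hg.comp_continuous (continuous_id.max continuous_const) fun t => le_max_right t a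
  have hGg : ∀ t ≥ a, G t = g t := fun t ht => by simp [G, max_eq_left ht]
  have hG_eq : ∀ t ≥ a, G t = g a + ∫ s in a..t, G s := fun t ht => by
    rw [hGg t ht, h t ht]
    congr 1
    refine intervalIntegral.integral_congr fun s hs => (hGg s ?_).symm
    exact (uIcc_of_le ht ▸ hs).1
  set F : ℝ → ℝ := fun t => (g a + ∫ s in a..t, G s) * exp (a - t)
  have hF : ∀ t, HasDerivAt F ((G t - (g a + ∫ s in a..t, G s)) * exp (a - t)) t := fun t => by
    have h1 := (hG.integral_hasStrictDerivAt a t).hasDerivAt.const_add (g a)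
    have h2 := ((hasDerivAt_id t).const_sub a).exp
    exact (h1.mul h2).congr_deriv (by simp only [id]; ring)
  have hF0 : ∀ t ∈ Ico a b, HasDerivWithinAt F 0 (Ici t) t := fun t ht => by
    simpa [← hG_eq t ht.1] using (hF t).hasDerivWithinAt
  have hFb := constant_of_has_deriv_right_zero
    (fun t _ => (hF t).continuousAt.continuousWithinAt) hF0 b ⟨hb, le_rfl⟩
  simp only [F, ← hG_eq b hb, hGg b hb, intervalIntegral.integral_same, add_zero, sub_self,
    exp_zero, mul_one] at hFb
  rw [← hFb, mul_assoc, ← exp_add]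
  simp

theorem eq_add_integral_of_mem_Icc_trans {f q : ℝ → ℝ} {a b c : ℝ}
    (hq : ∀ u v, IntervalIntegrable q volume u v) (hab : a ≤ b)
    (h₁ : ∀ t ∈ Icc a b, f t = f a + ∫ s in a..t, q s)
    (h₂ : ∀ t ∈ Icc b c, f t = f b + ∫ s in b..t, q s) :
    ∀ t ∈ Icc a c, f t = f a + ∫ s in a..t, q s := by
  intro t ht
  rcases le_total t b with htb | hbt
  · exact h₁ t ⟨ht.1, htb⟩
  · rw [h₂ t ⟨hbt, ht.2⟩, h₁ b ⟨hab, le_rfl⟩, add_assoc,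
      intervalIntegral.integral_add_adjacent_intervals (hq a b) (hq b t)]

namespace Function.Periodic

variable {f : ℝ → ℝ} {c : ℝ}

theorem apply_toIcoMod (hf : Periodic f c) (hc : 0 < c) (t : ℝ) :
    f (toIcoMod hc 0 t) = f t := by
  rw [← self_sub_toIcoDiv_zsmul, hf.sub_zsmul_eq]

theorem continuous_of_continuousOn_Icc (hf : Periodic f c) (hc : 0 < c)
    (h : ContinuousOn f (Icc 0 c)) : Continuous f := by
  have := Fact.mk hc
  have hlift := AddCircle.liftIco_zero_continuous (p := c) (by rw [hf.eq]) h
  convert hlift.comp (AddCircle.continuous_mk' c)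
  ext t
  have hmk : ((t : ℝ) : AddCircle c) = ((toIcoMod hc 0 t : ℝ) : AddCircle c) := by
    rw [← self_sub_toIcoDiv_zsmul, AddCircle.coe_sub, AddCircle.coe_zsmul, AddCircle.coe_period,
      smul_zero, sub_zero]
  rw [comp_apply, QuotientAddGroup.mk'_apply, hmk,
    AddCircle.liftIco_coe_apply (by simpa using toIcoMod_mem_Ico' hc t), hf.apply_toIcoMod hc]

theorem nonneg_of_pos_on_Ioo (hf : Periodic f c) (hc : 0 < c) (h0 : f 0 = 0)
    (hpos : ∀ t ∈ Ioo 0 c, 0 < f t) (t : ℝ) : 0 ≤ f t := by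
  rw [← hf.apply_toIcoMod hc]
  obtain ⟨h₁, h₂⟩ := toIcoMod_mem_Ico' hc t
  rcases h₁.eq_or_lt with h | h
  · rw [← h, h0]
  · exact (hpos _ ⟨h, h₂⟩).le

theorem eq_zero_iff_of_pos_on_Ioo (hf : Periodic f c) (hc : 0 < c) (h0 : f 0 = 0)
    (hpos : ∀ t ∈ Ioo 0 c, 0 < f t) (t : ℝ) : f t = 0 ↔ ∃ n : ℤ, t = n * c := by
  refine ⟨fun ht => ⟨toIcoDiv hc 0 t, ?_⟩, fun ⟨n, hn⟩ => hn ▸ (hf.int_mul_eq n).trans h0⟩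
  obtain ⟨h₁, h₂⟩ := toIcoMod_mem_Ico' hc t
  have hmod : toIcoMod hc 0 t = 0 := by
    refine h₁.eq_or_lt.elim Eq.symm fun h => ?_
    exact absurd (hf.apply_toIcoMod hc t ▸ ht) (hpos _ ⟨h, h₂⟩).ne'
  rw [← self_sub_toIcoMod_eq_mul, hmod, sub_zero]

theorem alphaOscillating (hf : Periodic f c) (hc : 0 < c) (h0 : f 0 = 0) :
    AlphaOscillating c f := by
  refine ⟨0, fun a b _ _ hab => not_lt.mp fun hlen => hab (a - toIcoMod hc 0 a + c) ?_ ?_⟩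
  · obtain ⟨h₁, h₂⟩ := toIcoMod_mem_Ico' hc a
    constructor <;> linarith
  · rw [hf, self_sub_toIcoMod, hf.zsmul_eq, h0]

theorem eq_add_integral_of_forall_mem_Icc {q : ℝ → ℝ} (hf : Periodic f c) (hq : Periodic q c)
    (hc : 0 < c) (hqi : ∀ u v, IntervalIntegrable q volume u v)
    (h : ∀ t ∈ Icc 0 c, f t = f 0 + ∫ s in (0:ℝ)..t, q s) (t : ℝ) :
    f t = f 0 + ∫ s in (0:ℝ)..t, q s := by
  have hperiod : ∫ s in (0:ℝ)..c, q s = 0 := by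
    have := h c ⟨hc.le, le_rfl⟩
    rw [hf.eq] at this
    linarith
  have hF : Periodic (fun t => f 0 + ∫ s in (0:ℝ)..t, q s) c := fun t => by
    simp only [hq.intervalIntegral_add_eq_add 0 t hqi, zero_add, hperiod, add_zero]
  rw [← hf.apply_toIcoMod hc, ← hF.apply_toIcoMod hc t]
  exact h _ (Ico_subset_Icc_self (toIcoMod_mem_Ico' hc t))

end Function.Periodic

theorem firstRoot_nonneg (x : ℝ → ℝ) : 0 ≤ firstRoot x :=
  Real.sInf_nonneg fun _ hw => hw.1.le

namespace IsXSol

variable {τ : ℝ} {x : ℝ → ℝ}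

theorem eq_one_sub (hx : IsXSol τ x) {t : ℝ} (ht : t ∈ Icc 0 τ) : x t = 1 - t := by
  have hone : ∀ s ∈ uIcc 0 t, x (s - τ) = 1 := fun s hs => by
    rw [uIcc_of_le ht.1] at hs
    exact hx.2.1 _ (by linarith [hs.2, ht.2])
  rw [hx.2.2 t ht.1, intervalIntegral.integral_congr hone]
  simp

theorem le_of_eq_zero (hx : IsXSol τ x) (hτ : τ ≤ 1) {r : ℝ} (hr : 0 < r) (hxr : x r = 0) :
    τ ≤ r := by
  by_contra! h
  linarith [hx.eq_one_sub ⟨hr.le, h.le⟩]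

theorem pos_of_lt_firstRoot (hx : IsXSol τ x) {w : ℝ} (hw : w < firstRoot x) : 0 < x w := by
  have hx0 : x 0 = 1 := hx.2.1 0 le_rfl
  rcases le_or_gt w 0 with h | h
  · rw [hx.2.1 w h]
    exact one_pos
  by_contra! hle
  obtain ⟨c, hc, hxc⟩ := intermediate_value_Icc' h.le hx.1.continuousOn
    (show (0:ℝ) ∈ Icc (x w) (x 0) by rw [hx0]; exact ⟨hle, zero_le_one⟩)
  have hc_pos : 0 < c := hc.1.lt_of_ne (by rintro rfl; simp [hx0] at hxc)
  have : firstRoot x ≤ c := csInf_le ⟨0, fun _ hz => hz.1.le⟩ ⟨hc_pos, hxc⟩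
  linarith [hc.2]

theorem le_one (hx : IsXSol τ x) (hτ : 0 < τ) {w : ℝ} (hw : w ≤ firstRoot x) : x w ≤ 1 := by
  rcases le_or_gt w 0 with h | h
  · rw [hx.2.1 w h]
  rw [hx.2.2 w h.le, sub_le_self_iff]
  exact intervalIntegral.integral_nonneg h.le fun s hs =>
    (hx.pos_of_lt_firstRoot (by linarith [hs.2])).le

end IsXSol

namespace IsPsiSol

variable {τ ρ : ℝ} {x ψ : ℝ → ℝ}

theorem intervalIntegrable (hψ : IsPsiSol τ ρ x ψ) (hx : Continuous x) {a b : ℝ} (ha : 0 ≤ a)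
    (hb : 0 ≤ b) : IntervalIntegrable (fun s => max (x (ρ + s - τ)) (ψ s)) volume a b := by
  refine ContinuousOn.intervalIntegrable ?_
  have hxc : Continuous fun s => x (ρ + s - τ) := hx.comp (by fun_prop)
  exact (hxc.continuousOn.sup hψ.1).mono fun s hs =>
    (le_min ha hb).trans hs.1

theorem monotoneOn (hψ : IsPsiSol τ ρ x ψ) (hx : Continuous x) (hx0 : ∀ w ≤ ρ, 0 ≤ x w) :
    MonotoneOn ψ (Icc 0 τ) := by
  intro s hs t ht hst
  rw [hψ.2.2.1 s hs, hψ.2.2.1 t ht, ← intervalIntegral.integral_add_adjacent_intervals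
    (hψ.intervalIntegrable hx le_rfl hs.1) (hψ.intervalIntegrable hx hs.1 ht.1),
    le_add_iff_nonneg_right]
  exact intervalIntegral.integral_nonneg hst fun u hu =>
    (hx0 _ (by linarith [hu.2, ht.2])).trans (le_max_left _ _)

theorem eq_mul_exp (hψ : IsPsiSol τ ρ x ψ) (hτ : 0 ≤ τ) {t : ℝ} (ht : τ ≤ t) :
    ψ t = ψ τ * exp (t - τ) :=
  eq_mul_exp_of_eq_add_integral (hψ.1.mono (Ici_subset_Ici.mpr hτ)) hψ.2.2.2 ht

theorem pos (hψ : IsPsiSol τ ρ x ψ) (hτ : 0 < τ) (hx : Continuous x)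
    (hxpos : ∀ w < ρ, 0 < x w) {t : ℝ} (ht : 0 < t) : 0 < ψ t := by
  have hpos_of_le : ∀ t, 0 < t → t ≤ τ → 0 < ψ t := fun t ht htτ => by
    rw [hψ.2.2.1 t ⟨ht.le, htτ⟩]
    exact intervalIntegral.intervalIntegral_pos_of_pos_on (hψ.intervalIntegrable hx le_rfl ht.le)
      (fun u hu => (hxpos _ (by linarith [hu.2])).trans_le (le_max_left _ _)) ht
  rcases le_or_gt t τ with h | h
  · exact hpos_of_le t ht h
  · rw [hψ.eq_mul_exp hτ.le h.le]
    exact mul_pos (hpos_of_le τ hτ le_rfl) (exp_pos _)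

theorem le_of_eq_one (hψ : IsPsiSol τ ρ x ψ) (hτ : τ ≤ 1) (hx : Continuous x)
    (hx0 : ∀ w ≤ ρ, 0 ≤ x w) (hx1 : ∀ w ≤ ρ, x w ≤ 1) {σ : ℝ} (hσ : 0 ≤ σ) (hψσ : ψ σ = 1) :
    τ ≤ σ := by
  by_contra! hστ
  have hbound : ψ σ ≤ σ := by
    rw [hψ.2.2.1 σ ⟨hσ, hστ.le⟩]
    calc ∫ s in (0:ℝ)..σ, max (x (ρ + s - τ)) (ψ s)
        ≤ ∫ s in (0:ℝ)..σ, (1:ℝ) := by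
          refine intervalIntegral.integral_mono_on hσ (hψ.intervalIntegrable hx le_rfl hσ)
            intervalIntegrable_const fun u hu => max_le (hx1 _ (by linarith [hu.2])) ?_
          exact hψσ ▸ hψ.monotoneOn hx hx0 ⟨hu.1, by linarith [hu.2]⟩ ⟨hσ, hστ.le⟩ hu.2
      _ = σ := by simp
  linarith

end IsPsiSol

theorem intervalIntegrable_mul_comp {p τd ϖ : ℝ → ℝ} {c : ℝ} (hc : c ≠ 0) (hper : Periodic ϖ c)
    (hϖ : Continuous ϖ) (hp : Measurable p) (hp1 : ∀ t, |p t| = 1) (hτd : Measurable τd)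
    (a b : ℝ) : IntervalIntegrable (fun t => p t * ϖ (τd t)) volume a b := by
  obtain ⟨C, hC⟩ := (hper.isBounded_of_continuous hc hϖ).exists_norm_le
  refine IntervalIntegrable.mono_fun' (g := fun _ => C) intervalIntegrable_const
    (hp.mul (hϖ.measurable.comp hτd)).aestronglyMeasurable (ae_of_all _ fun t => ?_)
  simpa [norm_mul, Real.norm_eq_abs, hp1] using hC _ ⟨τd t, rfl⟩

theorem exists_delay_equation_of_period {ϖ sgn δ : ℝ → ℝ} {c τ : ℝ} (hc : 0 < c)
    (hper : Periodic ϖ c) (hϖ : Continuous ϖ) (hsgn : Measurable sgn) (hsgn1 : ∀ r, |sgn r| = 1)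
    (hδ : Measurable δ) (hδτ : ∀ r, δ r ∈ Icc 0 τ) (hδ0 : δ 0 = τ)
    (h : ∀ t ∈ Icc 0 c, ϖ t = ϖ 0 + ∫ r in (0:ℝ)..t, sgn r * ϖ (r - δ r)) :
    ∃ p τd : ℝ → ℝ, Measurable p ∧ Measurable τd ∧ (∀ t, |p t| = 1) ∧ (∀ t, τd t ≤ t) ∧
      IsLUB {y : ℝ | ∃ t : ℝ, y = t - τd t} τ ∧ Tendsto τd atTop atTop ∧
      ∀ t : ℝ, ϖ t = ϖ 0 + ∫ s in (0:ℝ)..t, p s * ϖ (τd s) := by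
  set r : ℝ → ℝ := toIcoMod hc 0
  have hr : Measurable r := by
    have : r = fun t => Int.fract (t / c) * c := funext fun t => by
      simp [r, toIcoMod_eq_add_fract_mul]
    rw [this]
    exact (measurable_fract.comp (measurable_id.div_const c)).mul_const c
  have hτd : Measurable fun t => t - δ (r t) := measurable_id.sub (hδ.comp hr)
  refine ⟨sgn ∘ r, fun t => t - δ (r t), hsgn.comp hr, hτd, fun t => hsgn1 _,
    fun t => sub_le_self _ (hδτ _).1, ⟨?_, fun b hb => hb ⟨0, ?_⟩⟩, ?_, ?_⟩
  · rintro _ ⟨t, rfl⟩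
    simpa using (hδτ (r t)).2
  · simp [r, hδ0]
  · refine tendsto_atTop_mono (fun t => ?_) (tendsto_atTop_add_const_right _ (-τ) tendsto_id)
    dsimp only [id]
    linarith [(hδτ (r t)).2]
  have hq : Periodic (fun t => sgn (r t) * ϖ (t - δ (r t))) c := fun t => by
    simp only [r, toIcoMod_add_right, add_sub_right_comm, hper _]
  refine hper.eq_add_integral_of_forall_mem_Icc hq hc
    (intervalIntegrable_mul_comp hc.ne' hper hϖ (hsgn.comp hr) (fun t => hsgn1 _) hτd)
    fun t ht => ?_
  rw [h t ht]
  refine congrArg _ (intervalIntegral.integral_congr_Ioo_of_le ht.1 fun u hu => ?_)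
  have hu : r u = u := (toIcoMod_eq_self hc).2 ⟨hu.1.le, by linarith [hu.2, ht.2]⟩
  simp [hu]

structure IsPeriodicGluing (Λ ρ : ℝ) (ψ x ϖ : ℝ → ℝ) : Prop where
  periodic : Periodic ϖ Λ
  eq_left : ∀ t ∈ Icc 0 (Λ - ρ), ϖ t = ψ t
  eq_right : ∀ t ∈ Icc (Λ - ρ) Λ, ϖ t = x (t - (Λ - ρ))

def delayOnPeriod (τ σ : ℝ) (ϖ : ℝ → ℝ) (r : ℝ) : ℝ :=
  if r < τ then (if ϖ r ≤ ϖ (r - τ) then τ else 0) else if r < σ then 0 else min (r - σ) τ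

def signOnPeriod (σ r : ℝ) : ℝ := if r < σ then 1 else -1

section DelayOnPeriod

variable {τ σ : ℝ} {ϖ : ℝ → ℝ}

theorem measurable_delayOnPeriod (hϖ : Continuous ϖ) : Measurable (delayOnPeriod τ σ ϖ) :=
  Measurable.ite measurableSet_Iio
    (Measurable.ite
      (measurableSet_le hϖ.measurable (hϖ.measurable.comp (measurable_id.sub_const τ)))
      measurable_const measurable_const)
    (Measurable.ite measurableSet_Iio measurable_const
      ((measurable_id.sub_const σ).min measurable_const))

theorem delayOnPeriod_mem_Icc (hτ : 0 ≤ τ) (r : ℝ) : delayOnPeriod τ σ ϖ r ∈ Icc 0 τ := by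
  unfold delayOnPeriod
  split_ifs
  · exact ⟨hτ, le_rfl⟩
  · exact ⟨le_rfl, hτ⟩
  · exact ⟨le_rfl, hτ⟩
  · exact ⟨le_min (by linarith) hτ, min_le_right _ _⟩

theorem delayOnPeriod_zero (hτ : 0 < τ) (h : ϖ 0 ≤ ϖ (-τ)) : delayOnPeriod τ σ ϖ 0 = τ := by
  simp [delayOnPeriod, hτ, h]

theorem measurable_signOnPeriod (σ : ℝ) : Measurable (signOnPeriod σ) :=
  Measurable.ite measurableSet_Iio measurable_const measurable_const

theorem abs_signOnPeriod (σ r : ℝ) : |signOnPeriod σ r| = 1 := by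
  unfold signOnPeriod
  split_ifs <;> simp

end DelayOnPeriod

namespace IsPeriodicGluing

variable {τ ρ Λ : ℝ} {x ψ ϖ : ℝ → ℝ}

theorem continuous (hϖ : IsPeriodicGluing Λ ρ ψ x ϖ) (hρ : 0 ≤ ρ) (hρΛ : ρ < Λ)
    (hψ : ContinuousOn ψ (Ici 0)) (hx : Continuous x) : Continuous ϖ := by
  refine hϖ.periodic.continuous_of_continuousOn_Icc (by linarith) ?_
  rw [← Icc_union_Icc_eq_Icc (b := Λ - ρ) (by linarith) (by linarith)]
  refine ContinuousOn.union_of_isClosed ?_ ?_ isClosed_Icc isClosed_Icc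
  · exact (hψ.mono Icc_subset_Ici_self).congr hϖ.eq_left
  · exact (hx.comp (continuous_sub_right _)).continuousOn.congr hϖ.eq_right

theorem pos (hϖ : IsPeriodicGluing Λ ρ ψ x ϖ) (hψ : ∀ t > 0, 0 < ψ t) (hx : ∀ w < ρ, 0 < x w)
    {t : ℝ} (ht : t ∈ Ioo 0 Λ) : 0 < ϖ t := by
  rcases le_total t (Λ - ρ) with h | h
  · rw [hϖ.eq_left t ⟨ht.1.le, h⟩]
    exact hψ t ht.1
  · rw [hϖ.eq_right t ⟨h, ht.2.le⟩]
    exact hx _ (by linarith [ht.2])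

theorem eq_add_integral_of_mem_Icc_zero_tau (hϖ : IsPeriodicGluing Λ ρ ψ x ϖ)
    (hψ : IsPsiSol τ ρ x ψ) (hτρ : τ ≤ ρ) (hτσ : τ ≤ Λ - ρ) :
    ∀ t ∈ Icc 0 τ, ϖ t = ϖ 0 +
      ∫ r in (0:ℝ)..t, signOnPeriod (Λ - ρ) r * ϖ (r - delayOnPeriod τ (Λ - ρ) ϖ r) := by
  intro t ht
  rw [hϖ.eq_left t ⟨ht.1, ht.2.trans hτσ⟩, hϖ.eq_left 0 ⟨le_rfl, ht.1.trans (ht.2.trans hτσ)⟩,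
    hψ.2.1, zero_add, hψ.2.2.1 t ht]
  refine intervalIntegral.integral_congr_Ioo_of_le ht.1 fun r hr => ?_
  have hrτ : r < τ := hr.2.trans_le ht.2
  have hleft : ϖ r = ψ r := hϖ.eq_left r ⟨hr.1.le, by linarith⟩
  have hright : ϖ (r - τ) = x (ρ + r - τ) := by
    rw [← hϖ.periodic, hϖ.eq_right _ ⟨by linarith [hr.1], by linarith⟩]
    ring_nf
  simp only [signOnPeriod, delayOnPeriod, if_pos hrτ, if_pos (hrτ.trans_le hτσ), one_mul]
  rw [← hleft, ← hright]
  split_ifs with h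
  · exact max_eq_left h
  · rw [sub_zero, max_eq_right (not_le.mp h).le]

theorem eq_add_integral_of_mem_Icc_tau_sub (hϖ : IsPeriodicGluing Λ ρ ψ x ϖ)
    (hψ : IsPsiSol τ ρ x ψ) (hτ : 0 ≤ τ) (hτσ : τ ≤ Λ - ρ) :
    ∀ t ∈ Icc τ (Λ - ρ), ϖ t = ϖ τ +
      ∫ r in τ..t, signOnPeriod (Λ - ρ) r * ϖ (r - delayOnPeriod τ (Λ - ρ) ϖ r) := by
  intro t ht
  rw [hϖ.eq_left t ⟨hτ.trans ht.1, ht.2⟩, hϖ.eq_left τ ⟨hτ, hτσ⟩, hψ.2.2.2 t ht.1]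
  refine congrArg _ (intervalIntegral.integral_congr_Ioo_of_le ht.1 fun r hr => ?_)
  have hrσ : r < Λ - ρ := hr.2.trans_le ht.2
  simp [signOnPeriod, delayOnPeriod, not_lt.2 hr.1.le, hrσ,
    hϖ.eq_left r ⟨by linarith [hr.1], hrσ.le⟩]

theorem eq_add_integral_of_mem_Icc_sub_period (hϖ : IsPeriodicGluing Λ ρ ψ x ϖ) (hx : IsXSol τ x)
    (hτ : 0 ≤ τ) (hτσ : τ ≤ Λ - ρ) :
    ∀ t ∈ Icc (Λ - ρ) Λ, ϖ t = ϖ (Λ - ρ) +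
      ∫ r in (Λ - ρ)..t, signOnPeriod (Λ - ρ) r * ϖ (r - delayOnPeriod τ (Λ - ρ) ϖ r) := by
  intro t ht
  set σ := Λ - ρ
  have hσΛ : σ ≤ Λ := ht.1.trans ht.2
  rw [hϖ.eq_right t ht, hϖ.eq_right σ ⟨le_rfl, hσΛ⟩, sub_self, hx.2.2 _ (sub_nonneg.2 ht.1),
    hx.2.2 0 le_rfl, intervalIntegral.integral_same, sub_zero, sub_eq_add_neg,
    ← intervalIntegral.integral_neg, ← sub_self σ,
    ← intervalIntegral.integral_comp_sub_right (fun u => -x (u - τ))]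
  refine congrArg _ (intervalIntegral.integral_congr_Ioo_of_le ht.1 fun r hr => ?_)
  have hrτ : ¬ r < τ := not_lt.2 (hτσ.trans hr.1.le)
  simp only [signOnPeriod, delayOnPeriod, if_neg hrτ, if_neg (not_lt.2 hr.1.le), neg_one_mul]
  rcases le_total (r - σ) τ with h | h
  · rw [min_eq_left h, sub_sub_cancel, hϖ.eq_right σ ⟨le_rfl, hσΛ⟩, sub_self,
      hx.2.1 _ (by linarith), hx.2.1 0 le_rfl]
  · rw [min_eq_right h, hϖ.eq_right _ ⟨by linarith, by linarith [hr.2, ht.2]⟩, sub_right_comm]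

theorem eq_add_integral_of_mem_Icc (hϖ : IsPeriodicGluing Λ ρ ψ x ϖ) (hx : IsXSol τ x)
    (hψ : IsPsiSol τ ρ x ψ) (hτ : 0 < τ) (hτρ : τ ≤ ρ) (hτσ : τ ≤ Λ - ρ) (hϖc : Continuous ϖ) :
    ∀ t ∈ Icc 0 Λ, ϖ t = ϖ 0 +
      ∫ r in (0:ℝ)..t, signOnPeriod (Λ - ρ) r * ϖ (r - delayOnPeriod τ (Λ - ρ) ϖ r) := by
  have hint := intervalIntegrable_mul_comp (by linarith : 0 < Λ).ne' hϖ.periodic hϖc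
    (measurable_signOnPeriod (Λ - ρ)) (abs_signOnPeriod (Λ - ρ))
    (measurable_id.sub (measurable_delayOnPeriod (τ := τ) (σ := Λ - ρ) hϖc))
  refine eq_add_integral_of_mem_Icc_trans hint (hτ.le.trans hτσ) ?_
    (hϖ.eq_add_integral_of_mem_Icc_sub_period hx hτ.le hτσ)
  exact eq_add_integral_of_mem_Icc_trans hint hτ.le
    (hϖ.eq_add_integral_of_mem_Icc_zero_tau hψ hτρ hτσ)
    (hϖ.eq_add_integral_of_mem_Icc_tau_sub hψ hτ.le hτσ)

end IsPeriodicGluing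

theorem stmt12 (τ : ℝ) (hτ : τ ∈ Ioc (1 / Real.exp 1) 1)
    (xτ : ℝ → ℝ) (hx : IsXSol τ xτ) (ρ : ℝ) (hρ : ρ = firstRoot xτ)
    (ψ : ℝ → ℝ) (hψ : IsPsiSol τ ρ xτ ψ)
    (Λτ : ℝ) (hΛ : ρ < Λτ ∧ ψ (Λτ - ρ) = 1)
    (ϖ : ℝ → ℝ) (hper : Function.Periodic ϖ Λτ)
    (hϖ1 : ∀ t ∈ Icc (0:ℝ) (Λτ - ρ), ϖ t = ψ t)
    (hϖ2 : ∀ t ∈ Icc (Λτ - ρ) Λτ, ϖ t = xτ (t - (Λτ - ρ))) :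
    ψ (Λτ - ρ) = xτ 0 ∧ xτ ρ = ψ 0 ∧
    Continuous ϖ ∧
    (∀ t, 0 ≤ ϖ t) ∧
    (∀ t, ϖ t = 0 ↔ ∃ n : ℤ, t = n * Λτ) ∧
    (∃ p τd : ℝ → ℝ, Measurable p ∧ Measurable τd ∧
      (∀ t, |p t| = 1) ∧ (∀ t, τd t ≤ t) ∧
      IsLUB {y : ℝ | ∃ t : ℝ, y = t - τd t} τ ∧
      Filter.Tendsto τd Filter.atTop Filter.atTop ∧
      ∀ t : ℝ, ϖ t = ϖ 0 + ∫ s in (0:ℝ)..t, p s * ϖ (τd s)) ∧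
    AlphaOscillating Λτ ϖ := by
  obtain ⟨hτe, hτ1⟩ := hτ
  obtain ⟨hρΛ, hψΛ⟩ := hΛ
  have hτ0 : 0 < τ := (by positivity : (0:ℝ) < 1 / exp 1).trans hτe
  have hgl : IsPeriodicGluing Λτ ρ ψ xτ ϖ := ⟨hper, hϖ1, hϖ2⟩
  have hρ0 : 0 ≤ ρ := hρ ▸ firstRoot_nonneg xτ
  have hϖ0 : ϖ 0 = 0 := by rw [hϖ1 0 ⟨le_rfl, by linarith⟩, hψ.2.1]
  have hxρ : xτ ρ = 0 := by
    have := hϖ2 Λτ ⟨by linarith, le_rfl⟩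
    rwa [sub_sub_cancel, hper.eq, hϖ0, eq_comm] at this
  have hρ_pos : 0 < ρ := hρ0.lt_of_ne (by rintro rfl; simp [hx.2.1 0 le_rfl] at hxρ)
  have hxpos : ∀ w < ρ, 0 < xτ w := fun w hw => hx.pos_of_lt_firstRoot (hρ ▸ hw)
  have hxnonneg : ∀ w ≤ ρ, 0 ≤ xτ w := fun w hw =>
    hw.lt_or_eq.elim (fun h => (hxpos w h).le) fun h => h ▸ hxρ.ge
  have hτρ : τ ≤ ρ := hx.le_of_eq_zero hτ1 hρ_pos hxρ
  have hτσ : τ ≤ Λτ - ρ := hψ.le_of_eq_one hτ1 hx.1 hxnonneg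
    (fun w hw => hx.le_one hτ0 (hρ ▸ hw)) (by linarith) hψΛ
  have hΛ0 : 0 < Λτ := by linarith
  have hcont : Continuous ϖ := hgl.continuous hρ0 hρΛ hψ.1 hx.1
  have hpos : ∀ t ∈ Ioo 0 Λτ, 0 < ϖ t := fun t ht =>
    hgl.pos (fun t ht => hψ.pos hτ0 hx.1 hxpos ht) hxpos ht
  have hnonneg := hper.nonneg_of_pos_on_Ioo hΛ0 hϖ0 hpos
  refine ⟨by rw [hψΛ, hx.2.1 0 le_rfl], by rw [hxρ, hψ.2.1], hcont, hnonneg,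
    hper.eq_zero_iff_of_pos_on_Ioo hΛ0 hϖ0 hpos, ?_, hper.alphaOscillating hΛ0 hϖ0⟩
  exact exists_delay_equation_of_period hΛ0 hper hcont (measurable_signOnPeriod _)
    (abs_signOnPeriod _) (measurable_delayOnPeriod hcont) (delayOnPeriod_mem_Icc hτ0.le)
    (delayOnPeriod_zero hτ0 (by rw [hϖ0]; exact hnonneg _))
    (hgl.eq_add_integral_of_mem_Icc hx hψ hτ0 hτρ hτσ hcont)
end
end

section
/- There exist a measurable function τ̄ : ℝ → ℝ with t - 3/2 ≤ τ̄(t) ≤ t for all t, and an oscillatory solution x of the negative-feedback equation x'(t) = -x(τ̄(t)) on [3/2, ∞), such that M := limsup_{t→∞} |x(t)| is finite and strictly positive, and yet for no constant c ∈ ℝ does x(t) - M·ϖ⁻(t + c) tend to 0 as t → ∞. -/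
open Real MeasureTheory Filter Set

noncomputable section

/-!
On its `k`-th cycle `[E_k, E_{k+1}]` the solution is `M_k ϖ⁻(t - E_k + 5/2)`: one period of the
slowly oscillating periodic solution, started at its minimum `-M_k` but cut off `δ_k` before the
period ends, at the value `-M_k (1 - δ_k²/2) =: -M_{k+1}` where the next cycle starts. The delay
`τ̄(t)` points either back to an extremum of the current cycle or exactly `3/2` into the past, and
in each case `x(τ̄(t)) = -x'(t)`. For `δ_k = 1/(k+3)` the amplitudes `M_k = ∏ (1 - δ_i²/2)` stay
above `2/3`, while the phase lag `∑ δ_i` diverges in steps of at most `1/3`, so the cycle starts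
sweep through every residue modulo the period `5`. Hence along `t ∈ 5ℕ` the solution is infinitely
often `≥ 1/3` and infinitely often `≤ 0`, whereas `M ϖ⁻(t + c)` is constant there.
-/

open Topology

lemma continuous_if_lt_const {β : Type*} [TopologicalSpace β] {f g : ℝ → β} {c : ℝ}
    (hf : Continuous f) (hg : Continuous g) (hc : f c = g c) :
    Continuous fun x => if x < c then f x else g x :=
  hf.if (fun a ha => by
    rw [show {x : ℝ | x < c} = Iio c from rfl, frontier_Iio, mem_singleton_iff] at ha
    rwa [ha]) hg

lemma HasDerivAt.hasDerivWithinAt_Ioi_of_eqOn {E : Type*} [NormedAddCommGroup E]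
    [NormedSpace ℝ E] {f p : ℝ → E} {d : E} {v b : ℝ} (hp : HasDerivAt p d v) (hvb : v < b)
    (hf : EqOn f p (Ico v b)) : HasDerivWithinAt f d (Ioi v) v :=
  hp.hasDerivWithinAt.congr_of_eventuallyEq
    (mem_of_superset (Ioo_mem_nhdsGT hvb) fun _ hw => hf ⟨hw.1.le, hw.2⟩) (hf ⟨le_rfl, hvb⟩)

lemma hasDerivAt_quadratic (a b c w : ℝ) :
    HasDerivAt (fun v => a + b * v + c * v ^ 2) (b + 2 * c * w) w :=
  ((((hasDerivAt_id' w).const_mul b).const_add a).add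
    ((hasDerivAt_pow 2 w).const_mul c)).congr_deriv (by norm_num; ring)

namespace PhaseDrift

/-- On `[0, 5]` this is `ϖ⁻(v + 5/2)`, one period from the minimum; it is `-1` for `v < 0`. -/
def profile (v : ℝ) : ℝ :=
  if v < 0 then -1
  else if v < 3/2 then v - 1
  else if v < 5/2 then 1/2 + (v - 3/2) - (v - 3/2) ^ 2 / 2
  else if v < 4 then 7/2 - v
  else -1/2 - (v - 4) + (v - 4) ^ 2 / 2

def profileDeriv (v : ℝ) : ℝ :=
  if v < 0 then 0
  else if v < 3/2 then 1
  else if v < 5/2 then 5/2 - v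
  else if v < 4 then -1
  else v - 5

def profileLag (v : ℝ) : ℝ :=
  if v < 0 then v
  else if v < 3/2 then 0
  else if v < 5/2 then v - 3/2
  else if v < 4 then 5/2
  else v - 3/2

lemma profile_zero : profile 0 = -1 := by norm_num [profile]

lemma profile_one : profile 1 = 0 := by norm_num [profile]

lemma profile_five_sub {d : ℝ} (hd : d ∈ Icc (0 : ℝ) 1) : profile (5 - d) = -(1 - d ^ 2 / 2) := by
  obtain ⟨h0, h1⟩ := hd
  rw [profile, if_neg (by linarith), if_neg (by linarith), if_neg (by linarith),
    if_neg (by linarith)]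
  ring

lemma abs_profile_le {v : ℝ} (hv : v ≤ 5) : |profile v| ≤ 1 := by
  rw [abs_le, profile]
  split_ifs <;> constructor <;> nlinarith

lemma abs_profileDeriv_le {v : ℝ} (hv : v ≤ 5) : |profileDeriv v| ≤ 1 := by
  rw [abs_le, profileDeriv]
  split_ifs <;> constructor <;> linarith

lemma profileLag_mem (v : ℝ) : profileLag v ∈ Icc (v - 3/2) v := by
  rw [profileLag]
  split_ifs <;> constructor <;> linarith

lemma profileLag_nonneg {v : ℝ} (hv : 0 ≤ v) : 0 ≤ profileLag v := by
  rw [profileLag]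
  split_ifs <;> linarith

lemma profile_profileLag {v : ℝ} (hv : v ∈ Icc (0 : ℝ) 5) :
    profile (profileLag v) = -profileDeriv v := by
  obtain ⟨h0, h5⟩ := hv
  simp only [profileLag, profileDeriv, profile]
  split_ifs <;> first | ring1 | (exfalso; linarith)

lemma continuous_profile : Continuous profile := by
  refine continuous_if_lt_const continuous_const ?_ (by norm_num)
  refine continuous_if_lt_const (by fun_prop) ?_ (by norm_num)
  refine continuous_if_lt_const (by fun_prop) ?_ (by norm_num)
  exact continuous_if_lt_const (by fun_prop) (by fun_prop) (by norm_num)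

lemma hasDerivWithinAt_profile {w : ℝ} (hw : 0 ≤ w) :
    HasDerivWithinAt profile (profileDeriv w) (Ioi w) w := by
  obtain ⟨a, b, c, e, hwe, hpiece, hderiv⟩ : ∃ a b c e : ℝ, w < e ∧
      EqOn profile (fun v => a + b * v + c * v ^ 2) (Ico w e) ∧ profileDeriv w = b + 2 * c * w := by
    rcases lt_or_ge w (3/2) with h1 | h1
    · refine ⟨-1, 1, 0, 3/2, h1, fun v ⟨hv, hv'⟩ => ?_, ?_⟩ <;>
        simp only [profile, profileDeriv] <;> split_ifs <;> first | ring1 | (exfalso; linarith)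
    rcases lt_or_ge w (5/2) with h2 | h2
    · refine ⟨-17/8, 5/2, -1/2, 5/2, h2, fun v ⟨hv, hv'⟩ => ?_, ?_⟩ <;>
        simp only [profile, profileDeriv] <;> split_ifs <;> first | ring1 | (exfalso; linarith)
    rcases lt_or_ge w 4 with h3 | h3
    · refine ⟨7/2, -1, 0, 4, h3, fun v ⟨hv, hv'⟩ => ?_, ?_⟩ <;>
        simp only [profile, profileDeriv] <;> split_ifs <;> first | ring1 | (exfalso; linarith)
    · refine ⟨23/2, -5, 1/2, w + 1, by linarith, fun v ⟨hv, hv'⟩ => ?_, ?_⟩ <;>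
        simp only [profile, profileDeriv] <;> split_ifs <;> first | ring1 | (exfalso; linarith)
  exact ((hasDerivAt_quadratic a b c w).hasDerivWithinAt_Ioi_of_eqOn hwe hpiece).congr_deriv
    hderiv.symm

lemma measurable_profileDeriv : Measurable profileDeriv :=
  Measurable.ite measurableSet_Iio measurable_const <| Measurable.ite measurableSet_Iio
    measurable_const <| Measurable.ite measurableSet_Iio (by fun_prop) <|
    Measurable.ite measurableSet_Iio measurable_const (by fun_prop)

lemma measurable_profileLag : Measurable profileLag :=
  Measurable.ite measurableSet_Iio measurable_id <| Measurable.ite measurableSet_Iio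
    measurable_const <| Measurable.ite measurableSet_Iio (by fun_prop) <|
    Measurable.ite measurableSet_Iio measurable_const (by fun_prop)

lemma profile_eq_integral {v : ℝ} (hv : v ∈ Icc (0 : ℝ) 5) :
    profile v = -1 + ∫ w in 0..v, profileDeriv w := by
  have hint : IntervalIntegrable profileDeriv volume 0 v :=
    (intervalIntegrable_const (c := (1 : ℝ))).mono_fun' measurable_profileDeriv.aestronglyMeasurable
      (ae_restrict_of_forall_mem measurableSet_uIoc fun w hw => by
        rw [uIoc_of_le hv.1] at hw
        exact abs_profileDeriv_le (hw.2.trans hv.2))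
  rw [intervalIntegral.integral_eq_sub_of_hasDeriv_right_of_le hv.1 continuous_profile.continuousOn
    (fun w hw => hasDerivWithinAt_profile hw.1.le) hint, profile_zero]
  ring

lemma half_le_profile {v : ℝ} (hv : v ∈ Icc (3/2 : ℝ) (5/2)) : 1/2 ≤ profile v := by
  obtain ⟨h1, h2⟩ := hv
  simp only [profile]
  split_ifs <;> nlinarith

lemma profile_nonpos {v : ℝ} (hv : v ∈ Icc (0 : ℝ) 1) : profile v ≤ 0 := by
  obtain ⟨h1, h2⟩ := hv
  simp only [profile]
  split_ifs <;> linarith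

section Cycles

variable (δ : ℕ → ℝ)

def cycleStart (k : ℕ) : ℝ := ∑ i ∈ Finset.range k, (5 - δ i)

def amplitude (k : ℕ) : ℝ := ∏ i ∈ Finset.range k, (1 - δ i ^ 2 / 2)

open Classical in
/-- The `k` with `t ∈ [cycleStart δ k, cycleStart δ (k+1))`, and `0` for `t < 0`; searching up to
`⌈t⌉₊` suffices because `cycleStart δ k ≥ 4 k` when `δ ≤ 1`. -/
def cycleIndex (t : ℝ) : ℕ := Nat.findGreatest (fun k => cycleStart δ k ≤ t) ⌈t⌉₊

def slope (s : ℝ) : ℝ :=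
  amplitude δ (cycleIndex δ s) * profileDeriv (s - cycleStart δ (cycleIndex δ s))

def delay (s : ℝ) : ℝ :=
  cycleStart δ (cycleIndex δ s) + profileLag (s - cycleStart δ (cycleIndex δ s))

/-- Defined by integrating its derivative, so that it is continuous by construction. -/
def wave (t : ℝ) : ℝ := -1 + ∫ s in 0..t, slope δ s

variable {δ}

lemma cycleStart_zero : cycleStart δ 0 = 0 := by simp [cycleStart]

lemma cycleStart_succ (k : ℕ) : cycleStart δ (k + 1) = cycleStart δ k + (5 - δ k) :=
  Finset.sum_range_succ _ _

lemma amplitude_zero : amplitude δ 0 = 1 := by simp [amplitude]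

lemma amplitude_succ (k : ℕ) : amplitude δ (k + 1) = amplitude δ k * (1 - δ k ^ 2 / 2) :=
  Finset.prod_range_succ _ _

lemma amplitude_mem (hδ : ∀ k, δ k ∈ Icc (0 : ℝ) 1) (k : ℕ) : amplitude δ k ∈ Icc (0 : ℝ) 1 := by
  have hfactor : ∀ i, 0 ≤ 1 - δ i ^ 2 / 2 ∧ 1 - δ i ^ 2 / 2 ≤ 1 := fun i => by
    obtain ⟨h0, h1⟩ := hδ i
    constructor <;> nlinarith
  exact ⟨Finset.prod_nonneg fun i _ => (hfactor i).1,
    Finset.prod_le_one (fun i _ => (hfactor i).1) fun i _ => (hfactor i).2⟩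

lemma four_mul_le_cycleStart (hδ : ∀ k, δ k ∈ Icc (0 : ℝ) 1) (k : ℕ) :
    4 * (k : ℝ) ≤ cycleStart δ k := by
  calc 4 * (k : ℝ) = ∑ _i ∈ Finset.range k, (4 : ℝ) := by simp [mul_comm]
    _ ≤ cycleStart δ k := Finset.sum_le_sum fun i _ => by linarith [(hδ i).2]

lemma strictMono_cycleStart (hδ : ∀ k, δ k ∈ Icc (0 : ℝ) 1) : StrictMono (cycleStart δ) :=
  strictMono_nat_of_lt_succ fun k => by rw [cycleStart_succ]; linarith [(hδ k).2]

lemma cycleStart_cycleIndex_le {t : ℝ} (ht : 0 ≤ t) : cycleStart δ (cycleIndex δ t) ≤ t :=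
  Nat.findGreatest_spec (P := fun k => cycleStart δ k ≤ t) (Nat.zero_le _)
    (by rwa [cycleStart_zero])

lemma lt_cycleStart_cycleIndex_succ (hδ : ∀ k, δ k ∈ Icc (0 : ℝ) 1) (t : ℝ) :
    t < cycleStart δ (cycleIndex δ t + 1) := by
  by_contra! h
  have hle : cycleIndex δ t + 1 ≤ ⌈t⌉₊ := by
    by_contra! hlt
    have hceil : (⌈t⌉₊ : ℝ) < cycleIndex δ t + 1 := by exact_mod_cast hlt
    have := four_mul_le_cycleStart hδ (cycleIndex δ t + 1)
    push_cast at this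
    linarith [Nat.le_ceil t]
  exact Nat.findGreatest_is_greatest (Nat.lt_succ_self _) hle h

lemma cycleIndex_eq_of_mem (hδ : ∀ k, δ k ∈ Icc (0 : ℝ) 1) {t : ℝ} {k : ℕ}
    (ht : t ∈ Ico (cycleStart δ k) (cycleStart δ (k + 1))) : cycleIndex δ t = k := by
  have ht0 : 0 ≤ t := by linarith [ht.1, four_mul_le_cycleStart hδ k, k.cast_nonneg (α := ℝ)]
  have h1 := (strictMono_cycleStart hδ).lt_iff_lt.1
    ((cycleStart_cycleIndex_le ht0).trans_lt ht.2)
  have h2 := (strictMono_cycleStart hδ).lt_iff_lt.1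
    (ht.1.trans_lt (lt_cycleStart_cycleIndex_succ hδ t))
  omega

lemma cycleIndex_of_neg {t : ℝ} (ht : t < 0) : cycleIndex δ t = 0 := by
  rw [cycleIndex, Nat.ceil_eq_zero.2 ht.le, Nat.findGreatest_zero]

lemma monotone_cycleIndex : Monotone (cycleIndex δ) := fun _ _ hst =>
  Nat.findGreatest_mono (fun _ hk => hk.trans hst) (Nat.ceil_mono hst)

lemma measurable_cycleStart_cycleIndex : Measurable fun t => cycleStart δ (cycleIndex δ t) :=
  (measurable_from_nat (f := cycleStart δ)).comp monotone_cycleIndex.measurable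

lemma measurable_slope : Measurable (slope δ) :=
  ((measurable_from_nat (f := amplitude δ)).comp monotone_cycleIndex.measurable).mul
    (measurable_profileDeriv.comp (measurable_id.sub measurable_cycleStart_cycleIndex))

lemma measurable_delay : Measurable (delay δ) :=
  measurable_cycleStart_cycleIndex.add
    (measurable_profileLag.comp (measurable_id.sub measurable_cycleStart_cycleIndex))

lemma delay_mem (s : ℝ) : delay δ s ∈ Icc (s - 3/2) s := by
  have := profileLag_mem (s - cycleStart δ (cycleIndex δ s))
  constructor <;> simp only [delay] <;> linarith [this.1, this.2]

lemma slope_of_mem (hδ : ∀ k, δ k ∈ Icc (0 : ℝ) 1) {s : ℝ} {k : ℕ}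
    (hs : s ∈ Ico (cycleStart δ k) (cycleStart δ (k + 1))) :
    slope δ s = amplitude δ k * profileDeriv (s - cycleStart δ k) := by
  rw [slope, cycleIndex_eq_of_mem hδ hs]

lemma slope_of_neg {s : ℝ} (hs : s < 0) : slope δ s = 0 := by
  simp [slope, cycleIndex_of_neg hs, cycleStart_zero, profileDeriv, hs]

lemma abs_slope_le (hδ : ∀ k, δ k ∈ Icc (0 : ℝ) 1) (s : ℝ) : |slope δ s| ≤ 1 := by
  have hs := lt_cycleStart_cycleIndex_succ hδ s
  rw [cycleStart_succ] at hs
  have hM := amplitude_mem hδ (cycleIndex δ s)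
  rw [slope, abs_mul, abs_of_nonneg hM.1]
  exact mul_le_one₀ hM.2 (abs_nonneg _)
    (abs_profileDeriv_le (by linarith [(hδ (cycleIndex δ s)).1]))

lemma intervalIntegrable_slope (hδ : ∀ k, δ k ∈ Icc (0 : ℝ) 1) (a b : ℝ) :
    IntervalIntegrable (slope δ) volume a b :=
  (intervalIntegrable_const (c := (1 : ℝ))).mono_fun' measurable_slope.aestronglyMeasurable
    (ae_of_all _ (abs_slope_le hδ))

lemma continuous_wave (hδ : ∀ k, δ k ∈ Icc (0 : ℝ) 1) : Continuous (wave δ) :=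
  continuous_const.add (intervalIntegral.continuous_primitive (intervalIntegrable_slope hδ) 0)

lemma wave_sub_wave (hδ : ∀ k, δ k ∈ Icc (0 : ℝ) 1) (a b : ℝ) :
    wave δ b - wave δ a = ∫ s in a..b, slope δ s := by
  rw [wave, wave, add_sub_add_left_eq_sub, intervalIntegral.integral_interval_sub_left
    (intervalIntegrable_slope hδ 0 b) (intervalIntegrable_slope hδ 0 a)]

lemma wave_of_nonpos {t : ℝ} (ht : t ≤ 0) : wave δ t = -1 := by
  rw [wave, intervalIntegral.integral_congr_uIoo (g := fun _ => 0) fun s hs =>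
    slope_of_neg (by rw [uIoo_of_ge ht] at hs; exact hs.2)]
  simp

lemma wave_eq_of_start (hδ : ∀ k, δ k ∈ Icc (0 : ℝ) 1) {k : ℕ}
    (hk : wave δ (cycleStart δ k) = -amplitude δ k) {t : ℝ}
    (ht : t ∈ Icc (cycleStart δ k) (cycleStart δ (k + 1))) :
    wave δ t = amplitude δ k * profile (t - cycleStart δ k) := by
  have hlen := cycleStart_succ (δ := δ) k
  have hv : t - cycleStart δ k ∈ Icc (0 : ℝ) 5 :=
    ⟨by linarith [ht.1], by linarith [ht.2, (hδ k).1]⟩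
  calc wave δ t = wave δ (cycleStart δ k) + ∫ s in cycleStart δ k..t, slope δ s := by
        rw [← wave_sub_wave hδ]; ring
    _ = -amplitude δ k + ∫ s in cycleStart δ k..t,
          amplitude δ k * profileDeriv (s - cycleStart δ k) := by
        rw [hk, intervalIntegral.integral_congr_Ioo_of_le ht.1
          fun s hs => slope_of_mem hδ ⟨hs.1.le, hs.2.trans_le ht.2⟩]
    _ = -amplitude δ k + amplitude δ k * ∫ v in 0..t - cycleStart δ k, profileDeriv v := by
        rw [intervalIntegral.integral_const_mul, intervalIntegral.integral_comp_sub_right, sub_self]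
    _ = amplitude δ k * profile (t - cycleStart δ k) := by
        rw [profile_eq_integral hv]; ring

lemma wave_cycleStart (hδ : ∀ k, δ k ∈ Icc (0 : ℝ) 1) (k : ℕ) :
    wave δ (cycleStart δ k) = -amplitude δ k := by
  induction k with
  | zero => rw [cycleStart_zero, amplitude_zero, wave_of_nonpos le_rfl]
  | succ k ih =>
    have hlen := cycleStart_succ (δ := δ) k
    rw [wave_eq_of_start hδ ih ⟨by linarith [(hδ k).2], le_rfl⟩, hlen, add_sub_cancel_left,
      profile_five_sub (hδ k), amplitude_succ]
    ring

lemma wave_eq_of_mem (hδ : ∀ k, δ k ∈ Icc (0 : ℝ) 1) {k : ℕ} {t : ℝ}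
    (ht : t ∈ Icc (cycleStart δ k) (cycleStart δ (k + 1))) :
    wave δ t = amplitude δ k * profile (t - cycleStart δ k) :=
  wave_eq_of_start hδ (wave_cycleStart hδ k) ht

lemma abs_wave_le (hδ : ∀ k, δ k ∈ Icc (0 : ℝ) 1) (t : ℝ) : |wave δ t| ≤ 1 := by
  rcases lt_or_ge t 0 with ht | ht
  · rw [wave_of_nonpos ht.le]; norm_num
  set k := cycleIndex δ t
  have hnext := lt_cycleStart_cycleIndex_succ hδ t
  have hM := amplitude_mem hδ k
  rw [wave_eq_of_mem hδ ⟨cycleStart_cycleIndex_le ht, hnext.le⟩, abs_mul, abs_of_nonneg hM.1]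
  rw [cycleStart_succ] at hnext
  exact mul_le_one₀ hM.2 (abs_nonneg _) (abs_profile_le (by linarith [(hδ k).1]))

lemma wave_delay (hδ : ∀ k, δ k ∈ Icc (0 : ℝ) 1) {s : ℝ} (hs : 0 ≤ s) :
    wave δ (delay δ s) = -slope δ s := by
  set k := cycleIndex δ s
  set v := s - cycleStart δ k
  have hstart := cycleStart_cycleIndex_le (δ := δ) hs
  have hnext := lt_cycleStart_cycleIndex_succ hδ s
  have hlen := cycleStart_succ (δ := δ) k
  have hlag := profileLag_mem v
  have hlag0 := profileLag_nonneg (v := v) (by linarith)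
  rw [delay, wave_eq_of_mem hδ (k := k) ⟨by linarith, by linarith [hlag.2]⟩, add_sub_cancel_left,
    profile_profileLag ⟨by linarith, by linarith [(hδ k).1]⟩, slope]
  ring

lemma wave_eq_sub_integral (hδ : ∀ k, δ k ∈ Icc (0 : ℝ) 1) {a b : ℝ} (ha : 0 ≤ a) (hab : a ≤ b) :
    wave δ b = wave δ a - ∫ s in a..b, wave δ (delay δ s) := by
  rw [intervalIntegral.integral_congr fun s hs => wave_delay hδ (ha.trans (uIcc_of_le hab ▸ hs).1),
    intervalIntegral.integral_neg, ← wave_sub_wave hδ]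
  ring

lemma oscillatory_wave (hδ : ∀ k, δ k ∈ Icc (0 : ℝ) 1) : Oscillatory (wave δ) := by
  intro T
  set k := ⌈T⌉₊
  have hlen := cycleStart_succ (δ := δ) k
  refine ⟨cycleStart δ k + 1, by linarith [four_mul_le_cycleStart hδ k, Nat.le_ceil T], ?_⟩
  rw [wave_eq_of_mem hδ ⟨by linarith, by linarith [(hδ k).2]⟩, add_sub_cancel_left, profile_one,
    mul_zero]

end Cycles

end PhaseDrift

lemma exists_mem_Icc_of_tendsto_atTop {c : ℕ → ℝ} {a w : ℝ} (h0 : c 0 < a)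
    (hstep : ∀ k, c (k + 1) ≤ c k + w) (htop : Tendsto c atTop atTop) :
    ∃ k, c k ∈ Icc a (a + w) := by
  classical
  have hex : ∃ k, a ≤ c k := (htop.eventually_ge_atTop a).exists
  obtain ⟨k, hk⟩ := Nat.exists_eq_succ_of_ne_zero (n := Nat.find hex) fun h => by
    have := Nat.find_spec hex
    rw [h] at this
    linarith
  have hbefore := Nat.find_min hex (m := k) (by omega)
  have hafter := Nat.find_spec hex
  rw [hk] at hafter
  exact ⟨k + 1, hafter, by linarith [hstep k, not_le.1 hbefore]⟩

lemma not_tendsto_of_frequently_le_of_frequently_ge {α β : Type*} [TopologicalSpace β]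
    [LinearOrder β] [OrderClosedTopology β] {l : Filter α} {u : α → β} {a b c : β} (hab : a < b)
    (ha : ∃ᶠ x in l, u x ≤ a) (hb : ∃ᶠ x in l, b ≤ u x) : ¬ Tendsto u l (𝓝 c) := fun h =>
  (isClosed_Iic.mem_of_frequently_of_tendsto ha h).not_gt
    (hab.trans_le (isClosed_Ici.mem_of_frequently_of_tendsto hb h))

namespace PhaseDrift

def drift (k : ℕ) : ℝ := 1 / (k + 3)

lemma drift_nonneg (k : ℕ) : 0 ≤ drift k := by unfold drift; positivity

lemma drift_le (k : ℕ) : drift k ≤ 1/3 := by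
  unfold drift
  gcongr
  linarith [k.cast_nonneg (α := ℝ)]

lemma drift_mem (k : ℕ) : drift k ∈ Icc (0 : ℝ) 1 :=
  ⟨drift_nonneg k, (drift_le k).trans (by norm_num)⟩

lemma tendsto_sum_drift : Tendsto (fun k => ∑ i ∈ Finset.range k, drift i) atTop atTop := by
  refine (not_summable_iff_tendsto_nat_atTop_of_nonneg drift_nonneg).1 fun h => ?_
  refine Real.not_summable_one_div_natCast ((summable_nat_add_iff 3).1 ?_)
  exact h.congr fun k => by simp [drift]

lemma cycleStart_drift (k : ℕ) : cycleStart drift k = 5 * k - ∑ i ∈ Finset.range k, drift i := by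
  simp [cycleStart, Finset.sum_sub_distrib, mul_comm]

lemma two_thirds_le_amplitude_drift (k : ℕ) : 2/3 ≤ amplitude drift k := by
  -- `1 - drift k ^ 2 / 2 ≥ (k + 2) (k + 4) / (k + 3) ^ 2`, and these factors telescope
  have hbound : ∀ k : ℕ, 2 * (k + 3) / (3 * (k + 2)) ≤ amplitude drift k := by
    intro k
    induction k with
    | zero => norm_num [amplitude_zero]
    | succ k ih =>
      have hk : (0 : ℝ) ≤ k := k.cast_nonneg
      calc 2 * ((k + 1 : ℕ) + 3 : ℝ) / (3 * ((k + 1 : ℕ) + 2))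
          = 2 * (k + 3) / (3 * (k + 2)) * (1 - 1 / (k + 3) ^ 2) := by
            push_cast; field_simp; ring
        _ ≤ amplitude drift k * (1 - drift k ^ 2 / 2) := by
            have hsq : drift k ^ 2 = 1 / (k + 3) ^ 2 := by rw [drift, div_pow, one_pow]
            have hpos : 0 < 1 / ((k : ℝ) + 3) ^ 2 := by positivity
            refine mul_le_mul ih (by linarith) ?_ (amplitude_mem drift_mem k).1
            rw [sub_nonneg, div_le_one (by positivity)]
            nlinarith
        _ = amplitude drift (k + 1) := (amplitude_succ k).symm
  refine le_trans ?_ (hbound k)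
  rw [le_div_iff₀ (by positivity)]
  linarith

lemma exists_five_mul_sub_cycleStart_mem {w : ℝ} (hw : 0 < w) (N : ℕ) :
    ∃ n ≥ N, ∃ k, 5 * (n : ℝ) - cycleStart drift k ∈ Icc w (w + 1/3) := by
  obtain ⟨k, hk⟩ := exists_mem_Icc_of_tendsto_atTop (a := 5 * N + w) (w := 1/3)
    (by rw [Finset.sum_range_zero]; positivity)
    (fun k => by rw [Finset.sum_range_succ]; linarith [drift_le k])
    tendsto_sum_drift
  have hsum : ∑ i ∈ Finset.range k, drift i ≤ k / 3 := by
    calc ∑ i ∈ Finset.range k, drift i ≤ ∑ _i ∈ Finset.range k, (1/3 : ℝ) :=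
          Finset.sum_le_sum fun i _ => drift_le i
      _ = k / 3 := by rw [Finset.sum_const, Finset.card_range, nsmul_eq_mul]; ring
  have hNk : 2 * N ≤ k := by
    have : (2 * N : ℝ) ≤ k := by linarith [hk.1, (N.cast_nonneg (α := ℝ))]
    exact_mod_cast this
  refine ⟨k - N, by omega, k, ?_⟩
  rw [cycleStart_drift, Nat.cast_sub (by omega)]
  constructor <;> linarith [hk.1, hk.2]

lemma wave_drift_five_mul_of_mem {w : ℝ} (hw : 0 ≤ w) (hw' : w ≤ 4) {n k : ℕ}
    (hnk : 5 * (n : ℝ) - cycleStart drift k ∈ Icc w (w + 1/3)) :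
    wave drift (5 * n) = amplitude drift k * profile (5 * n - cycleStart drift k) := by
  have hlen := cycleStart_succ (δ := drift) k
  exact wave_eq_of_mem drift_mem ⟨by linarith [hnk.1], by linarith [hnk.2, drift_le k]⟩

lemma frequently_wave_drift_five_mul_nonpos : ∃ᶠ n : ℕ in atTop, wave drift (5 * n) ≤ 0 := by
  refine frequently_atTop.2 fun N => ?_
  obtain ⟨n, hn, k, hnk⟩ := exists_five_mul_sub_cycleStart_mem (w := 1/2) (by norm_num) N
  refine ⟨n, hn, ?_⟩
  rw [wave_drift_five_mul_of_mem (by norm_num) (by norm_num) hnk]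
  exact mul_nonpos_of_nonneg_of_nonpos (amplitude_mem drift_mem k).1
    (profile_nonpos ⟨by linarith [hnk.1], by linarith [hnk.2]⟩)

lemma frequently_third_le_wave_drift_five_mul :
    ∃ᶠ n : ℕ in atTop, 1/3 ≤ wave drift (5 * n) := by
  refine frequently_atTop.2 fun N => ?_
  obtain ⟨n, hn, k, hnk⟩ := exists_five_mul_sub_cycleStart_mem (w := 3/2) (by norm_num) N
  refine ⟨n, hn, ?_⟩
  rw [wave_drift_five_mul_of_mem (by norm_num) (by norm_num) hnk]
  have := half_le_profile ⟨hnk.1, by linarith [hnk.2]⟩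
  nlinarith [two_thirds_le_amplitude_drift k]

lemma limsup_abs_wave_drift_pos : 0 < limsup (fun t => |wave drift t|) atTop := by
  have hfreq : ∃ᶠ t in atTop, 2/3 ≤ |wave drift t| := by
    refine frequently_atTop.2 fun T => ⟨cycleStart drift ⌈T⌉₊, ?_, ?_⟩
    · linarith [four_mul_le_cycleStart drift_mem ⌈T⌉₊, Nat.le_ceil T]
    · rw [wave_cycleStart drift_mem, abs_neg, abs_of_nonneg (amplitude_mem drift_mem _).1]
      exact two_thirds_le_amplitude_drift _
  have hbdd : IsBoundedUnder (· ≤ ·) atTop fun t => |wave drift t| :=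
    isBoundedUnder_of ⟨1, abs_wave_le drift_mem⟩
  linarith [le_limsup_of_frequently_le hfreq hbdd]

end PhaseDrift

theorem stmt18_general (ϖm : ℝ → ℝ)
    (h3 : ∀ t : ℝ, ϖm t = -ϖm (t + 5/2)) :
    ∃ τd x : ℝ → ℝ, Measurable τd ∧
      (∀ t, t - 3/2 ≤ τd t ∧ τd t ≤ t) ∧
      Continuous x ∧
      (∀ t ≥ (3/2:ℝ), x t = x (3/2) - ∫ s in (3/2:ℝ)..t, x (τd s)) ∧
      Oscillatory x ∧
      (∃ B : ℝ, ∀ t, |x t| ≤ B) ∧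
      0 < Filter.limsup (fun t => |x t|) Filter.atTop ∧
      ∀ c : ℝ, ¬ Filter.Tendsto
          (fun t => x t - Filter.limsup (fun s => |x s|) Filter.atTop * ϖm (t + c))
          Filter.atTop (nhds 0) := by
  open PhaseDrift in
  refine ⟨delay drift, wave drift, measurable_delay, delay_mem, continuous_wave drift_mem,
    fun t ht => wave_eq_sub_integral drift_mem (by norm_num) ht, oscillatory_wave drift_mem,
    ⟨1, abs_wave_le drift_mem⟩, limsup_abs_wave_drift_pos, fun c hc => ?_⟩
  have hper : Function.Periodic ϖm 5 := by
    have hanti : Function.Antiperiodic ϖm (5/2) := fun t => by rw [h3 t, neg_neg]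
    simpa [show (2 : ℝ) * (5/2) = 5 by norm_num] using hanti.periodic_two_mul
  have hlim : Tendsto (fun n : ℕ => wave drift (5 * n)) atTop
      (𝓝 (limsup (fun s => |wave drift s|) atTop * ϖm c)) := by
    refine tendsto_sub_nhds_zero_iff.1 ((hc.comp (tendsto_natCast_atTop_atTop.const_mul_atTop
      (by norm_num : (0 : ℝ) < 5))).congr fun n => ?_)
    rw [Function.comp_apply, show 5 * (n : ℝ) + c = c + n * 5 by ring, hper.nat_mul n c]
  exact not_tendsto_of_frequently_le_of_frequently_ge (by norm_num : (0 : ℝ) < 1/3)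
    frequently_wave_drift_five_mul_nonpos frequently_third_le_wave_drift_five_mul hlim

theorem stmt18 (ϖm : ℝ → ℝ)
    (h1 : ∀ t ∈ Icc (0:ℝ) (3/2), ϖm t = 1 - t)
    (h2 : ∀ t ∈ Icc (3/2:ℝ) (5/2), ϖm t = -1/2 - (t - 3/2) + (t - 3/2)^2 / 2)
    (h3 : ∀ t : ℝ, ϖm t = -ϖm (t + 5/2)) :
    ∃ τd x : ℝ → ℝ, Measurable τd ∧
      (∀ t, t - 3/2 ≤ τd t ∧ τd t ≤ t) ∧
      Continuous x ∧
      (∀ t ≥ (3/2:ℝ), x t = x (3/2) - ∫ s in (3/2:ℝ)..t, x (τd s)) ∧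
      Oscillatory x ∧
      (∃ B : ℝ, ∀ t, |x t| ≤ B) ∧
      0 < Filter.limsup (fun t => |x t|) Filter.atTop ∧
      ∀ c : ℝ, ¬ Filter.Tendsto
          (fun t => x t - Filter.limsup (fun s => |x s|) Filter.atTop * ϖm (t + c))
          Filter.atTop (nhds 0) :=
  stmt18_general ϖm h3

end
end

section
/- Let p, τ̄ : ℝ → ℝ be measurable with p locally integrable, τ̄(t) ≤ t for all t, and τ̄(t) → ∞ as t → ∞. Define f(t) := ∫_0^t |p(s)| ds for t ≥ 0 and f(t) := t for t ≤ 0, and assume f(t) → ∞ as t → ∞. Define g(t) := inf{s ≥ 0 : f(s) = t} for t ≥ 0, and let x be a solution of x'(t) = p(t)·x(τ̄(t)) on [0, ∞) (i.e., x is continuous and x(t) = x(0) + ∫_0^t p(s)·x(τ̄(s)) ds for all t ≥ 0). Then: (i) x(g(f(t))) = x(t) for all t ≥ 0, so the function x̃ defined by x̃(s) := x(g(s)) for s ≥ 0 and x̃(s) := x(s) for s ≤ 0 satisfies x̃(f(t)) = x(t) for all t; (ii) p(g(s)) ≠ 0 for a.e. s ≥ 0; and (iii) x̃(s) = x̃(0)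 + ∫_0^s sgn(p(g(w)))·x̃(f(τ̄(g(w)))) dw for all s ≥ 0, where sgn is the sign function; in particular, since f(τ̄(g(w))) = τ̄(g(w)) when τ̄(g(w)) ≤ 0, the transformed function x̃ solves a delay equation whose coefficient has absolute value 1 almost everywhere. -/
/-!
The substitution `s = f t` is a time change with clock `f t = ∫₀ᵗ |p|`, and `g` is its
generalized inverse: for `w, u ≥ 0` we have `g w ≤ u ↔ w ≤ f u`. Where `f` is constant, `p`
vanishes almost everywhere, so `x` is constant as well; this gives `x (g (f t)) = x t`.
The Galois connection identifies the image of Lebesgue measure on `[0, s]` under `g` with the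
measure `|p u| du` on `[0, g s]`. Hence `g` almost never lands in `{p = 0}`, and
`∫₀ˢ φ (g w) dw = ∫₀^{g s} |p| φ`; for `φ = sgn p · x ∘ τ̄` the right-hand side is
`∫₀^{g s} p · x ∘ τ̄ = x (g s) - x 0`.
-/

open Real MeasureTheory Filter Set

noncomputable section

lemma Real.measurable_sign : Measurable Real.sign :=
  Measurable.ite measurableSet_Iio measurable_const
    (Measurable.ite measurableSet_Ioi measurable_const measurable_const)

lemma Real.abs_mul_sign (r : ℝ) : |r| * Real.sign r = r := by
  rcases lt_trichotomy r 0 with h | rfl | h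
  · rw [Real.sign_of_neg h, abs_of_neg h, mul_neg_one, neg_neg]
  · simp
  · rw [Real.sign_of_pos h, abs_of_pos h, mul_one]

/-- The least `s ≥ 0` with `F s = w`; it is `0` when there is none, as `sInf ∅ = 0`. -/
def firstHit (F : ℝ → ℝ) (w : ℝ) : ℝ := sInf {s | 0 ≤ s ∧ F s = w}

section firstHit

variable {F : ℝ → ℝ} {s u w : ℝ}

lemma firstHit_congr {F' : ℝ → ℝ} (h : ∀ s, 0 ≤ s → F s = F' s) :
    firstHit F = firstHit F' := by
  funext w
  unfold firstHit
  congr 1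
  ext s
  exact and_congr_right fun hs => by rw [h s hs]

lemma firstHit_nonneg (F : ℝ → ℝ) (w : ℝ) : 0 ≤ firstHit F w :=
  Real.sInf_nonneg fun _ hs => hs.1

lemma firstHit_le (hs : 0 ≤ s) (h : F s = w) : firstHit F w ≤ s :=
  csInf_le ⟨0, fun _ hs => hs.1⟩ ⟨hs, h⟩

lemma firstHit_apply_le (hs : 0 ≤ s) : firstHit F (F s) ≤ s :=
  firstHit_le hs rfl

lemma firstHit_zero (hF0 : F 0 = 0) : firstHit F 0 = 0 :=
  le_antisymm (firstHit_le le_rfl hF0) (firstHit_nonneg F 0)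

lemma apply_firstHit (hFc : Continuous F) (hF0 : F 0 = 0) (hFtop : Tendsto F atTop atTop)
    (hw : 0 ≤ w) : F (firstHit F w) = w := by
  obtain ⟨R, hR, hR0⟩ := ((hFtop.eventually_ge_atTop w).and (eventually_ge_atTop 0)).exists
  obtain ⟨v, hv, hvw⟩ :=
    intermediate_value_Icc hR0 hFc.continuousOn (show w ∈ Icc (F 0) (F R) from ⟨by rwa [hF0], hR⟩)
  have hclosed : IsClosed {s | 0 ≤ s ∧ F s = w} :=
    isClosed_Ici.inter (isClosed_eq hFc continuous_const)
  exact (hclosed.csInf_mem ⟨v, hv.1, hvw⟩ ⟨0, fun _ hs => hs.1⟩).2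

lemma firstHit_le_iff (hFc : Continuous F) (hFm : Monotone F) (hF0 : F 0 = 0)
    (hFtop : Tendsto F atTop atTop) (hw : 0 ≤ w) (hu : 0 ≤ u) :
    firstHit F w ≤ u ↔ w ≤ F u := by
  refine ⟨fun h => apply_firstHit hFc hF0 hFtop hw ▸ hFm h, fun h => ?_⟩
  obtain ⟨v, hv, hvw⟩ :=
    intermediate_value_Icc hu hFc.continuousOn (show w ∈ Icc (F 0) (F u) from ⟨by rwa [hF0], h⟩)
  exact (firstHit_le hv.1 hvw).trans hv.2

lemma monotone_firstHit (hFc : Continuous F) (hFm : Monotone F) (hF0 : F 0 = 0)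
    (hFtop : Tendsto F atTop atTop) : Monotone (firstHit F) := by
  intro a b hab
  rcases lt_or_ge a 0 with ha | ha
  · have hempty : {s | 0 ≤ s ∧ F s = a} = ∅ :=
      eq_empty_of_forall_notMem fun s hs => ha.not_ge (hs.2 ▸ hF0 ▸ hFm hs.1)
    rw [firstHit, hempty, Real.sInf_empty]
    exact firstHit_nonneg F b
  · rw [firstHit_le_iff hFc hFm hF0 hFtop ha (firstHit_nonneg F b),
      apply_firstHit hFc hF0 hFtop (ha.trans hab)]
    exact hab

end firstHit

section Primitive

variable {ρ F : ℝ → ℝ}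

lemma continuous_of_eq_primitive (hρ : LocallyIntegrable ρ)
    (hF : F = fun t => ∫ u in (0:ℝ)..t, ρ u) : Continuous F :=
  hF ▸ intervalIntegral.continuous_primitive
    (fun _ _ => (hρ.integrableOn_isCompact isCompact_uIcc).intervalIntegrable) 0

lemma integral_eq_sub_of_eq_primitive (hρ : LocallyIntegrable ρ)
    (hF : F = fun t => ∫ u in (0:ℝ)..t, ρ u) (a b : ℝ) : ∫ u in a..b, ρ u = F b - F a := by
  have hint : ∀ c, IntervalIntegrable ρ volume 0 c :=
    fun _ => (hρ.integrableOn_isCompact isCompact_uIcc).intervalIntegrable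
  rw [hF, intervalIntegral.integral_interval_sub_left (hint b) (hint a)]

lemma monotone_of_eq_primitive (hρ : LocallyIntegrable ρ) (hρ0 : ∀ u, 0 ≤ ρ u)
    (hF : F = fun t => ∫ u in (0:ℝ)..t, ρ u) : Monotone F := fun a b hab =>
  sub_nonneg.1 <| integral_eq_sub_of_eq_primitive hρ hF a b ▸
    intervalIntegral.integral_nonneg hab fun u _ => hρ0 u

lemma monotone_firstHit_of_eq_primitive (hρ : LocallyIntegrable ρ) (hρ0 : ∀ u, 0 ≤ ρ u)
    (hF : F = fun t => ∫ u in (0:ℝ)..t, ρ u) (hFtop : Tendsto F atTop atTop) :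
    Monotone (firstHit F) :=
  monotone_firstHit (continuous_of_eq_primitive hρ hF) (monotone_of_eq_primitive hρ hρ0 hF)
    (by simp [hF]) hFtop

lemma withDensity_Icc_zero_of_eq_primitive (hρ : LocallyIntegrable ρ) (hρ0 : ∀ u, 0 ≤ ρ u)
    (hF : F = fun t => ∫ u in (0:ℝ)..t, ρ u) {c : ℝ} (hc : 0 ≤ c) :
    volume.withDensity (fun u => ENNReal.ofReal (ρ u)) (Icc 0 c) = ENNReal.ofReal (F c) := by
  rw [withDensity_apply _ measurableSet_Icc,
    ← ofReal_integral_eq_lintegral_ofReal (hρ.integrableOn_isCompact isCompact_Icc)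
      (ae_of_all _ hρ0),
    integral_Icc_eq_integral_Ioc, ← intervalIntegral.integral_of_le hc, hF]

lemma map_firstHit_restrict_Icc (hρ : LocallyIntegrable ρ) (hρ0 : ∀ u, 0 ≤ ρ u)
    (hF : F = fun t => ∫ u in (0:ℝ)..t, ρ u) (hFtop : Tendsto F atTop atTop)
    {s : ℝ} (hs : 0 ≤ s) :
    (volume.restrict (Icc 0 s)).map (firstHit F) =
      (volume.withDensity fun u => ENNReal.ofReal (ρ u)).restrict (Icc 0 (firstHit F s)) := by
  have hFc := continuous_of_eq_primitive hρ hF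
  have hFm := monotone_of_eq_primitive hρ hρ0 hF
  have hF0 : F 0 = 0 := by simp [hF]
  have hG := monotone_firstHit_of_eq_primitive hρ hρ0 hF hFtop
  refine Measure.ext_of_Iic _ _ fun u => ?_
  rw [Measure.map_apply hG.measurable measurableSet_Iic, Measure.restrict_apply' measurableSet_Icc,
    Measure.restrict_apply' measurableSet_Icc]
  rcases lt_or_ge u 0 with hu | hu
  · have hleft : firstHit F ⁻¹' Iic u ∩ Icc 0 s = ∅ :=
      eq_empty_of_forall_notMem fun w hw => hu.not_ge ((firstHit_nonneg F w).trans hw.1)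
    have hright : Iic u ∩ Icc 0 (firstHit F s) = ∅ :=
      eq_empty_of_forall_notMem fun w hw => hu.not_ge (hw.2.1.trans hw.1)
    rw [hleft, hright, measure_empty, measure_empty]
  · have hleft : firstHit F ⁻¹' Iic u ∩ Icc 0 s = Icc 0 (min (F u) s) := by
      ext w
      simp only [mem_inter_iff, mem_preimage, mem_Iic, mem_Icc, le_min_iff]
      constructor
      · rintro ⟨hwu, hw0, hws⟩
        exact ⟨hw0, (firstHit_le_iff hFc hFm hF0 hFtop hw0 hu).1 hwu, hws⟩
      · rintro ⟨hw0, hwu, hws⟩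
        exact ⟨(firstHit_le_iff hFc hFm hF0 hFtop hw0 hu).2 hwu, hw0, hws⟩
    have hright : Iic u ∩ Icc 0 (firstHit F s) = Icc 0 (min u (firstHit F s)) := by
      ext w
      simp only [mem_inter_iff, mem_Iic, mem_Icc, le_min_iff]
      tauto
    rw [hleft, hright, Real.volume_Icc, sub_zero,
      withDensity_Icc_zero_of_eq_primitive hρ hρ0 hF (le_min hu (firstHit_nonneg F s)),
      hFm.map_min, apply_firstHit hFc hF0 hFtop hs]

lemma ae_firstHit_ne_zero (hρ : LocallyIntegrable ρ) (hρm : Measurable ρ) (hρ0 : ∀ u, 0 ≤ ρ u)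
    (hF : F = fun t => ∫ u in (0:ℝ)..t, ρ u) (hFtop : Tendsto F atTop atTop) :
    ∀ᵐ s, 0 ≤ s → ρ (firstHit F s) ≠ 0 := by
  have hG : Measurable (firstHit F) :=
    (monotone_firstHit_of_eq_primitive hρ hρ0 hF hFtop).measurable
  have hdensity : ∀ᵐ u ∂volume.withDensity (fun u => ENNReal.ofReal (ρ u)), ρ u ≠ 0 :=
    (ae_withDensity_iff hρm.ennreal_ofReal).2 <| ae_of_all _ fun u hu hρu => by simp [hρu] at hu
  have hIcc : ∀ n : ℕ, ∀ᵐ s, s ∈ Icc 0 (n : ℝ) → ρ (firstHit F s) ≠ 0 := fun n => by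
    rw [← ae_restrict_iff' measurableSet_Icc]
    refine (ae_map_iff hG.aemeasurable ((measurableSet_singleton 0).preimage hρm).compl).1 ?_
    rw [map_firstHit_restrict_Icc hρ hρ0 hF hFtop n.cast_nonneg]
    exact ae_restrict_of_ae hdensity
  filter_upwards [ae_all_iff.2 hIcc] with s hs hs0 using hs ⌈s⌉₊ ⟨hs0, Nat.le_ceil s⟩

lemma integral_comp_firstHit (hρ : LocallyIntegrable ρ) (hρm : Measurable ρ)
    (hρ0 : ∀ u, 0 ≤ ρ u) (hF : F = fun t => ∫ u in (0:ℝ)..t, ρ u)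
    (hFtop : Tendsto F atTop atTop) {φ : ℝ → ℝ} (hφ : Measurable φ) {s : ℝ} (hs : 0 ≤ s) :
    ∫ w in (0:ℝ)..s, φ (firstHit F w) = ∫ u in (0:ℝ)..firstHit F s, ρ u * φ u := by
  have hG : Measurable (firstHit F) :=
    (monotone_firstHit_of_eq_primitive hρ hρ0 hF hFtop).measurable
  rw [intervalIntegral.integral_of_le hs, ← integral_Icc_eq_integral_Ioc,
    ← integral_map hG.aemeasurable hφ.aestronglyMeasurable,
    map_firstHit_restrict_Icc hρ hρ0 hF hFtop hs, restrict_withDensity measurableSet_Icc,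
    intervalIntegral.integral_of_le (firstHit_nonneg F s), ← integral_Icc_eq_integral_Ioc]
  refine (integral_withDensity_eq_integral_smul hρm.real_toNNReal φ).trans ?_
  simp only [NNReal.smul_def, Real.coe_toNNReal _ (hρ0 _), smul_eq_mul]

end Primitive

lemma eq_of_integral_abs_eq_zero {p y x : ℝ → ℝ}
    (hx : ∀ t ≥ (0:ℝ), x t = x 0 + ∫ s in (0:ℝ)..t, p s * y s) {a b : ℝ} (ha : 0 ≤ a)
    (hab : a ≤ b) (hp : IntervalIntegrable p volume a b) (h : ∫ s in a..b, |p s| = 0) :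
    x a = x b := by
  have hp0 : ∀ᵐ s, s ∈ Ioc a b → p s = 0 := by
    rw [← ae_restrict_iff' measurableSet_Ioc]
    filter_upwards [(intervalIntegral.integral_eq_zero_iff_of_le_of_nonneg_ae hab
      (ae_of_all _ fun s => abs_nonneg (p s)) hp.abs).1 h] with s hs using abs_eq_zero.1 hs
  -- `p * y` need not be integrable, so the two integrals are compared through their domains
  -- rather than by additivity of the integral.
  have hsplit : ∫ s in Ioc 0 b, p s * y s = ∫ s in Ioc 0 a, p s * y s := by
    refine setIntegral_eq_of_subset_of_ae_sdiff_eq_zero measurableSet_Ioc.nullMeasurableSet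
      (Ioc_subset_Ioc_right hab) ?_
    filter_upwards [hp0] with s hs hs'
    rw [hs ⟨not_le.1 fun hsa => hs'.2 ⟨hs'.1.1, hsa⟩, hs'.1.2⟩, zero_mul]
  rw [hx a ha, hx b (ha.trans hab), intervalIntegral.integral_of_le ha,
    intervalIntegral.integral_of_le (ha.trans hab), hsplit]

theorem stmt19_general (p τd : ℝ → ℝ) (hpm : Measurable p)
    (hploc : MeasureTheory.LocallyIntegrable p)
    (hτdm : Measurable τd)
    (f : ℝ → ℝ)
    (hf : ∀ t : ℝ, f t = if 0 ≤ t then ∫ s in (0:ℝ)..t, |p s| else t)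
    (hfinf : Filter.Tendsto f Filter.atTop Filter.atTop)
    (g : ℝ → ℝ) (hg : ∀ t : ℝ, g t = sInf {s : ℝ | 0 ≤ s ∧ f s = t})
    (x : ℝ → ℝ) (hxc : Continuous x)
    (hxsol : ∀ t ≥ (0:ℝ), x t = x 0 + ∫ s in (0:ℝ)..t, p s * x (τd s))
    (xt : ℝ → ℝ) (hxt : ∀ s : ℝ, xt s = if 0 ≤ s then x (g s) else x s) :
    (∀ t ≥ (0:ℝ), x (g (f t)) = x t) ∧
    (∀ t : ℝ, xt (f t) = x t) ∧
    (∀ᵐ s : ℝ ∂volume, 0 ≤ s → p (g s) ≠ 0) ∧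
    (∀ s ≥ (0:ℝ),
      xt s = xt 0 + ∫ w in (0:ℝ)..s, Real.sign (p (g w)) * xt (f (τd (g w)))) := by
  set F : ℝ → ℝ := fun t => ∫ s in (0:ℝ)..t, |p s| with hF
  have hρ : LocallyIntegrable fun s => |p s| :=
    hploc.mono hpm.abs.aestronglyMeasurable (ae_of_all _ fun s => by simp)
  have hρ0 : ∀ s, 0 ≤ |p s| := fun s => abs_nonneg (p s)
  have hfF : ∀ t, 0 ≤ t → f t = F t := fun t ht => by rw [hf, if_pos ht]
  have hFtop : Tendsto F atTop atTop := hfinf.congr' ((eventually_ge_atTop 0).mono hfF)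
  have hF0 : F 0 = 0 := intervalIntegral.integral_same
  have hgF : g = firstHit F := (funext hg).trans (firstHit_congr hfF)
  have hF_nonneg : ∀ t, 0 ≤ t → 0 ≤ F t := fun t ht =>
    hF0 ▸ monotone_of_eq_primitive hρ hρ0 hF ht
  have part1 : ∀ t ≥ (0:ℝ), x (g (f t)) = x t := fun t ht => by
    rw [hgF, hfF t ht]
    refine eq_of_integral_abs_eq_zero hxsol (firstHit_nonneg F _) (firstHit_apply_le ht)
      (hploc.integrableOn_isCompact isCompact_uIcc).intervalIntegrable ?_
    rw [integral_eq_sub_of_eq_primitive hρ hF,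
      apply_firstHit (continuous_of_eq_primitive hρ hF) hF0 hFtop (hF_nonneg t ht),
      sub_self]
  have part2 : ∀ t, xt (f t) = x t := fun t => by
    rcases le_or_gt 0 t with ht | ht
    · rw [hxt, if_pos (hfF t ht ▸ hF_nonneg t ht), part1 t ht]
    · rw [hf, if_neg ht.not_ge, hxt, if_neg ht.not_ge]
  refine ⟨part1, part2, ?_, fun s hs => ?_⟩
  · simpa only [hgF, ne_eq, abs_eq_zero] using ae_firstHit_ne_zero hρ hpm.abs hρ0 hF hFtop
  · have hφ : Measurable fun u => Real.sign (p u) * x (τd u) :=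
      (Real.measurable_sign.comp hpm).mul (hxc.measurable.comp hτdm)
    simp only [part2]
    rw [hxt, if_pos hs, hxt, if_pos le_rfl, hgF, firstHit_zero hF0,
      integral_comp_firstHit hρ hpm.abs hρ0 hF hFtop hφ hs]
    simp only [← mul_assoc, Real.abs_mul_sign]
    exact hxsol _ (firstHit_nonneg F s)

theorem stmt19 (p τd : ℝ → ℝ) (hpm : Measurable p)
    (hploc : MeasureTheory.LocallyIntegrable p)
    (hτdm : Measurable τd) (hτdle : ∀ t, τd t ≤ t)
    (hτdinf : Filter.Tendsto τd Filter.atTop Filter.atTop)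
    (f : ℝ → ℝ)
    (hf : ∀ t : ℝ, f t = if 0 ≤ t then ∫ s in (0:ℝ)..t, |p s| else t)
    (hfinf : Filter.Tendsto f Filter.atTop Filter.atTop)
    (g : ℝ → ℝ) (hg : ∀ t : ℝ, g t = sInf {s : ℝ | 0 ≤ s ∧ f s = t})
    (x : ℝ → ℝ) (hxc : Continuous x)
    (hxsol : ∀ t ≥ (0:ℝ), x t = x 0 + ∫ s in (0:ℝ)..t, p s * x (τd s))
    (xt : ℝ → ℝ) (hxt : ∀ s : ℝ, xt s = if 0 ≤ s then x (g s) else x s) :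
    (∀ t ≥ (0:ℝ), x (g (f t)) = x t) ∧
    (∀ t : ℝ, xt (f t) = x t) ∧
    (∀ᵐ s : ℝ ∂volume, 0 ≤ s → p (g s) ≠ 0) ∧
    (∀ s ≥ (0:ℝ),
      xt s = xt 0 + ∫ w in (0:ℝ)..s, Real.sign (p (g w)) * xt (f (τd (g w)))) :=
  stmt19_general p τd hpm hploc hτdm f hf hfinf g hg x hxc hxsol xt hxt
end
end
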